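/- arXiv:2303.03871 — 10 statements merged into one kernel-verified Lean document; each statement's English description precedes it below -/
import Mathlib

section
/- Let x be a bounded real sequence with exactly n accumulation points (n ≥ 1). Then there exist a partition S_1,…,S_n of ℕ into infinite sets and distinct real numbers ξ_1,…,ξ_n such that x − (ξ_1·1_{S_1} + … + ξ_n·1_{S_n}) ∈ c_0. -/
open Filter Topology Set ENNReal

noncomputable section

/-- The set of accumulation points of a real sequence: limits of convergent subsequences. -/
def accPts (x : ℕ → ℝ) : Set ℝ :=
  {a | ∃ φ : ℕ → ℕ, StrictMono φ ∧ Tendsto (fun k => x (φ k)) atTop (𝓝 a)}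

theorem exists_partition_representation (x : ℕ → ℝ) (hx : ∃ C, ∀ n, |x n| ≤ C)
    (n : ℕ) (hn : 1 ≤ n) (hfin : (accPts x).Finite) (hcard : (accPts x).ncard = n) :
    ∃ (S : Fin n → Set ℕ) (ξ : Fin n → ℝ),
      (∀ i, (S i).Infinite) ∧ Pairwise (Function.onFun Disjoint S) ∧
      (⋃ i, S i) = Set.univ ∧ Function.Injective ξ ∧
      Tendsto (fun m => x m - ∑ i, (S i).indicator (fun _ => ξ i) m) atTop (𝓝 0) := by
  obtain ⟨C, hC⟩ := hx
  have hmem : ∀ m, x m ∈ Icc (-C) C := fun m => abs_le.mp (hC m)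
  -- enumerate the accumulation points
  have hcardF : n = hfin.toFinset.card := by
    rw [← hcard, Set.ncard_eq_toFinset_card _ hfin]
  set e := hfin.toFinset.equivFin with he
  set ξ : Fin n → ℝ := fun i => ((e.symm (Fin.cast hcardF i)) : ℝ) with hξ
  have hξmem : ∀ i, ξ i ∈ accPts x := fun i =>
    hfin.mem_toFinset.mp (e.symm (Fin.cast hcardF i)).2
  have hξinj : Function.Injective ξ := by
    intro i j h
    have h2 : Fin.cast hcardF i = Fin.cast hcardF j :=
      e.symm.injective (Subtype.coe_injective h)
    have := congrArg Fin.val h2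
    simp at this
    exact Fin.ext this
  have hξsurj : ∀ a ∈ accPts x, ∃ i, ξ i = a := by
    intro a ha
    refine ⟨Fin.cast hcardF.symm (e ⟨a, hfin.mem_toFinset.mpr ha⟩), ?_⟩
    simp [hξ]
  -- minimal gap
  have hgap : ∀ i : Fin n, ∃ δ > 0, ∀ j, j ≠ i → δ ≤ |ξ i - ξ j| := by
    intro i
    by_cases hs : (Finset.univ.erase i).Nonempty
    · refine ⟨(Finset.univ.erase i).inf' hs (fun j => |ξ i - ξ j|), ?_, ?_⟩
      · rw [gt_iff_lt, Finset.lt_inf'_iff]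
        intro j hj
        have hji : j ≠ i := (Finset.mem_erase.mp hj).1
        exact abs_pos.mpr (sub_ne_zero.mpr fun h => hji (hξinj h).symm)
      · intro j hj
        exact Finset.inf'_le _ (Finset.mem_erase.mpr ⟨hj, Finset.mem_univ j⟩)
    · exact ⟨1, one_pos, fun j hj =>
        absurd (Finset.mem_erase.mpr ⟨hj, Finset.mem_univ j⟩) (fun h => hs ⟨j, h⟩)⟩
  -- nearest-point assignment
  have hne : Nonempty (Fin n) := ⟨⟨0, hn⟩⟩
  have hmin : ∀ m, ∃ i : Fin n, ∀ j, |x m - ξ i| ≤ |x m - ξ j| := by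
    intro m
    obtain ⟨i, _, hi⟩ := Finset.exists_min_image Finset.univ (fun j => |x m - ξ j|)
      Finset.univ_nonempty
    exact ⟨i, fun j => hi j (Finset.mem_univ j)⟩
  choose f hf using hmin
  refine ⟨fun i => f ⁻¹' {i}, ξ, ?_, ?_, ?_, hξinj, ?_⟩
  · -- infinite
    intro i
    obtain ⟨δ, hδ, hδ'⟩ := hgap i
    obtain ⟨φ, hφ, hφt⟩ := hξmem i
    obtain ⟨N, hN⟩ := Metric.tendsto_atTop.mp hφt (δ / 2) (by linarith)
    apply Set.infinite_of_injective_forall_mem (f := fun k : ℕ => φ (N + k))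
    · exact hφ.injective.comp fun a b h => by omega
    · intro k
      have hclose : |x (φ (N + k)) - ξ i| < δ / 2 := by
        have := hN (N + k) (by omega)
        rwa [Real.dist_eq] at this
      by_contra hcon
      have hfi : f (φ (N + k)) ≠ i := hcon
      have h1 : |x (φ (N + k)) - ξ (f (φ (N + k)))| < δ / 2 :=
        lt_of_le_of_lt (hf _ i) hclose
      have h2 : δ ≤ |ξ i - ξ (f (φ (N + k)))| := hδ' _ hfi
      have h3 : |ξ i - ξ (f (φ (N + k)))| ≤
          |ξ i - x (φ (N + k))| + |x (φ (N + k)) - ξ (f (φ (N + k)))| :=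
        abs_sub_le _ _ _
      rw [abs_sub_comm (ξ i) (x (φ (N + k)))] at h3
      linarith
  · -- pairwise disjoint
    intro i j hij
    simp only [Function.onFun]
    rw [Set.disjoint_left]
    rintro m hmi hmj
    exact hij (hmi.symm.trans hmj)
  · -- union
    ext m
    simp only [Set.mem_iUnion, Set.mem_preimage, Set.mem_singleton_iff, Set.mem_univ, iff_true]
    exact ⟨f m, rfl⟩
  · -- tendsto
    have hsum : ∀ m, ∑ i, (f ⁻¹' {i}).indicator (fun _ => ξ i) m = ξ (f m) := by
      intro m
      rw [Finset.sum_eq_single (f m)]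
      · simp [Set.indicator_apply]
      · intro j _ hj
        simp [Set.indicator_apply, Ne.symm hj]
      · simp
    simp only [hsum]
    rw [NormedAddCommGroup.tendsto_nhds_zero]
    intro ε hε
    by_contra hcon
    rw [Filter.not_eventually] at hcon
    have hcon' : ∃ᶠ m in atTop, ∀ j, ε ≤ |x m - ξ j| := by
      refine hcon.mono fun m hm j => ?_
      have h1 : ε ≤ |x m - ξ (f m)| := by
        rw [Real.norm_eq_abs] at hm; exact not_lt.mp hm
      exact h1.trans (hf m j)
    obtain ⟨ψ, hψ, hψ'⟩ := Filter.extraction_of_frequently_atTop hcon'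
    obtain ⟨a, -, σ, hσ, hσt⟩ := tendsto_subseq_of_bounded (Metric.isBounded_Icc (-C) C)
      (fun k => hmem (ψ k))
    have ha : a ∈ accPts x := ⟨ψ ∘ σ, hψ.comp hσ, hσt⟩
    obtain ⟨j, hj⟩ := hξsurj a ha
    obtain ⟨N, hN⟩ := Metric.tendsto_atTop.mp hσt ε hε
    have h1 := hN N le_rfl
    have h2 := hψ' (σ N) j
    rw [hj] at h2
    simp only [Function.comp_apply, Real.dist_eq] at h1
    linarith
end
end

section
/- Let x, y ∈ ℓ∞ with x ∼_{c₀} Σ_{i=1}^n ξ_i 1_{S_i} and y ∼_{c₀} Σ_{j=1}^k η_j 1_{T_j}, where S_1,…,S_n and T_1,…,T_k are partitions of ℕ into infinite sets and the ξ_i (resp. η_j) are distinct reals. Then for all real λ, μ not both zero, L_{λx+μy} = { λξ_i + μη_j : 1 ≤ i ≤ n, 1 ≤ j ≤ k, S_i ∩ T_j infinite }. -/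
open Filter Topology Set ENNReal

noncomputable section

lemma accPts_congr {z f : ℕ → ℝ} (h : Tendsto (fun m => z m - f m) atTop (𝓝 0)) :
    accPts z = accPts f := by
  ext a
  constructor
  · rintro ⟨φ, hφ, hlim⟩
    refine ⟨φ, hφ, ?_⟩
    have h2 := h.comp hφ.tendsto_atTop
    have := hlim.sub h2
    simpa using this
  · rintro ⟨φ, hφ, hlim⟩
    refine ⟨φ, hφ, ?_⟩
    have h2 := h.comp hφ.tendsto_atTop
    have := hlim.add h2
    simpa using this

lemma eventually_eq_of_tendsto_finite {u : ℕ → ℝ} {c : ℝ} {F : Set ℝ} (hF : F.Finite)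
    (hu : ∀ m, u m ∈ F) (hlim : Tendsto u atTop (𝓝 c)) : ∀ᶠ m in atTop, u m = c := by
  have hop : IsOpen (F \ {c})ᶜ := ((hF.subset (diff_subset)).isClosed).isOpen_compl
  have hc : c ∈ (F \ {c})ᶜ := by simp
  filter_upwards [hlim.eventually (hop.mem_nhds hc)] with m hm
  have := hu m
  by_contra hne
  exact hm ⟨this, hne⟩

theorem accPts_lin_comb (x y : ℕ → ℝ) (hx : ∃ C, ∀ n, |x n| ≤ C) (hy : ∃ C, ∀ n, |y n| ≤ C)
    (n k : ℕ) (S : Fin n → Set ℕ) (T : Fin k → Set ℕ) (ξ : Fin n → ℝ) (η : Fin k → ℝ)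
    (hS : ∀ i, (S i).Infinite) (hSd : Pairwise (Function.onFun Disjoint S))
    (hSu : (⋃ i, S i) = Set.univ)
    (hT : ∀ j, (T j).Infinite) (hTd : Pairwise (Function.onFun Disjoint T))
    (hTu : (⋃ j, T j) = Set.univ)
    (hξ : Function.Injective ξ) (hη : Function.Injective η)
    (hxS : Tendsto (fun m => x m - ∑ i, (S i).indicator (fun _ => ξ i) m) atTop (𝓝 0))
    (hyT : Tendsto (fun m => y m - ∑ j, (T j).indicator (fun _ => η j) m) atTop (𝓝 0))
    (l μ : ℝ) (hlμ : l ≠ 0 ∨ μ ≠ 0) :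
    accPts (fun m => l * x m + μ * y m) =
      {c | ∃ i j, (S i ∩ T j).Infinite ∧ c = l * ξ i + μ * η j} := by
  set f : ℕ → ℝ := fun m =>
    l * (∑ i, (S i).indicator (fun _ => ξ i) m) + μ * (∑ j, (T j).indicator (fun _ => η j) m)
    with hf
  -- evaluation of the S-sum
  have hSval : ∀ m (i : Fin n), m ∈ S i → (∑ i', (S i').indicator (fun _ => ξ i') m) = ξ i := by
    intro m i hm
    rw [Finset.sum_eq_single i]
    · exact Set.indicator_of_mem hm _
    · intro i' _ hne
      have : m ∉ S i' := fun hm' => (hSd hne).le_bot ⟨hm', hm⟩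
      exact Set.indicator_of_notMem this _
    · intro h; exact absurd (Finset.mem_univ i) h
  have hTval : ∀ m (j : Fin k), m ∈ T j → (∑ j', (T j').indicator (fun _ => η j') m) = η j := by
    intro m j hm
    rw [Finset.sum_eq_single j]
    · exact Set.indicator_of_mem hm _
    · intro j' _ hne
      have : m ∉ T j' := fun hm' => (hTd hne).le_bot ⟨hm', hm⟩
      exact Set.indicator_of_notMem this _
    · intro h; exact absurd (Finset.mem_univ j) h
  have hfval : ∀ m (i : Fin n) (j : Fin k), m ∈ S i → m ∈ T j → f m = l * ξ i + μ * η j := by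
    intro m i j hi hj
    simp only [hf, hSval m i hi, hTval m j hj]
  have hmemS : ∀ m : ℕ, ∃ i, m ∈ S i := by
    intro m
    have : m ∈ ⋃ i, S i := hSu ▸ Set.mem_univ m
    exact Set.mem_iUnion.mp this
  have hmemT : ∀ m : ℕ, ∃ j, m ∈ T j := by
    intro m
    have : m ∈ ⋃ j, T j := hTu ▸ Set.mem_univ m
    exact Set.mem_iUnion.mp this
  have hzf : Tendsto (fun m => (l * x m + μ * y m) - f m) atTop (𝓝 0) := by
    have := (hxS.const_mul l).add (hyT.const_mul μ)
    simp only [mul_zero, add_zero] at this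
    convert this using 2 with m
    ring
  rw [accPts_congr hzf]
  ext c
  constructor
  · rintro ⟨φ, hφ, hlim⟩
    -- the values of f lie in a finite set
    have hmemF : ∀ m, f m ∈ (fun p : Fin n × Fin k => l * ξ p.1 + μ * η p.2) '' Set.univ := by
      intro m
      obtain ⟨i, hi⟩ := hmemS m
      obtain ⟨j, hj⟩ := hmemT m
      exact ⟨(i, j), Set.mem_univ _, (hfval m i j hi hj).symm⟩
    have hFfin : ((fun p : Fin n × Fin k => l * ξ p.1 + μ * η p.2) '' Set.univ).Finite :=
      Set.finite_univ.image _
    have hev : ∀ᶠ j in atTop, f (φ j) = c :=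
      eventually_eq_of_tendsto_finite hFfin (fun j => hmemF (φ j)) hlim
    have hfreq : ∃ᶠ m in atTop, f m = c :=
      hφ.tendsto_atTop.frequently hev.frequently
    have hinf : {m | f m = c}.Infinite := Nat.frequently_atTop_iff_infinite.mp hfreq
    have hsub : {m | f m = c} ⊆
        ⋃ p : Fin n × Fin k, {m | m ∈ S p.1 ∩ T p.2 ∧ l * ξ p.1 + μ * η p.2 = c} := by
      intro m hm
      obtain ⟨i, hi⟩ := hmemS m
      obtain ⟨j, hj⟩ := hmemT m
      exact Set.mem_iUnion.mpr ⟨(i, j), ⟨⟨hi, hj⟩, by rw [← hfval m i j hi hj]; exact hm⟩⟩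
    have hUinf := hinf.mono hsub
    have : ∃ p : Fin n × Fin k, {m | m ∈ S p.1 ∩ T p.2 ∧ l * ξ p.1 + μ * η p.2 = c}.Infinite := by
      by_contra h
      push_neg at h
      exact hUinf (Set.finite_iUnion h)
    obtain ⟨⟨i, j⟩, hp⟩ := this
    obtain ⟨m, -, hval⟩ := hp.nonempty
    exact ⟨i, j, hp.mono (fun m hm => hm.1), hval.symm⟩
  · rintro ⟨i, j, hinf, rfl⟩
    have hfreq : ∃ᶠ m in atTop, m ∈ S i ∩ T j :=
      Nat.frequently_atTop_iff_infinite.mpr hinf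
    obtain ⟨φ, hφ, hmem⟩ := Filter.extraction_of_frequently_atTop hfreq
    refine ⟨φ, hφ, ?_⟩
    have : ∀ m, f (φ m) = l * ξ i + μ * η j := fun m =>
      hfval (φ m) i j (hmem m).1 (hmem m).2
    simp only [this]
    exact tendsto_const_nhds
end
end

section
/- Let x, y ∈ ℓ∞ each have finitely many accumulation points, with associated representations x ∼_{c₀} Σ ξ_i 1_{S_i}, y ∼_{c₀} Σ η_j 1_{T_j} as above, and let E = {(i,j) : S_i ∩ T_j infinite}. Then there exists z ∈ span{x,y} with |L_z| = |E|, there exists z' ∈ span{x,y} with |L_{z'}| < |E|, and |E| = max{ |L_z| : z ∈ span{x,y} }. -/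
open Filter Topology Set ENNReal

noncomputable section

lemma accPts_eq_image_aux {ι : Type*} [Finite ι] (z : ℕ → ℝ) (f : ℕ → ι) (g : ι → ℝ)
    (h : Tendsto (fun m => z m - g (f m)) atTop (𝓝 0)) :
    accPts z = g '' {p | {m | f m = p}.Infinite} := by
  ext a
  constructor
  · rintro ⟨φ, hφ, hlim⟩
    have hex : ∃ p : ι, {j | f (φ j) = p}.Infinite := by
      by_contra hc
      push_neg at hc
      have hfin : (⋃ p : ι, {j | f (φ j) = p}).Finite := Set.finite_iUnion hc
      have huniv : (⋃ p : ι, {j | f (φ j) = p}) = Set.univ := by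
        ext j; simp
      rw [huniv] at hfin
      exact Set.infinite_univ hfin
    obtain ⟨p, hp⟩ := hex
    refine ⟨p, ?_, ?_⟩
    · have hsub : φ '' {j | f (φ j) = p} ⊆ {m | f m = p} := by
        rintro _ ⟨j, hj, rfl⟩; exact hj
      exact Set.Infinite.mono hsub (hp.image hφ.injective.injOn)
    · set ψ := Nat.nth (fun j => f (φ j) = p) with hψdef
      have hψ : StrictMono ψ := Nat.nth_strictMono hp
      have hψp : ∀ j, f (φ (ψ j)) = p := fun j => Nat.nth_mem_of_infinite hp j
      have h1 : Tendsto (fun j => z (φ (ψ j))) atTop (𝓝 a) := hlim.comp hψ.tendsto_atTop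
      have h2 : Tendsto (fun j => z (φ (ψ j))) atTop (𝓝 (g p)) := by
        have h0 := h.comp ((hφ.comp hψ).tendsto_atTop)
        have h3 : Tendsto (fun j => z (φ (ψ j)) - g p) atTop (𝓝 0) := by
          simpa only [Function.comp_def, hψp] using h0
        simpa using h3.add_const (g p)
      exact (tendsto_nhds_unique h1 h2).symm ▸ rfl
  · rintro ⟨p, hp, rfl⟩
    have hp' : {m | f m = p}.Infinite := hp
    refine ⟨Nat.nth (fun m => f m = p), Nat.nth_strictMono hp', ?_⟩
    have hpm : ∀ j, f (Nat.nth (fun m => f m = p) j) = p :=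
      fun j => Nat.nth_mem_of_infinite hp' j
    have h0 := h.comp (Nat.nth_strictMono hp').tendsto_atTop
    have h3 : Tendsto (fun j => z (Nat.nth (fun m => f m = p) j) - g p) atTop (𝓝 0) := by
      simpa only [Function.comp_def, hpm] using h0
    simpa using h3.add_const (g p)

theorem exists_max_card_in_span (x y : ℕ → ℝ)
    (hx : ∃ C, ∀ n, |x n| ≤ C) (hy : ∃ C, ∀ n, |y n| ≤ C)
    (n k : ℕ) (hn : 2 ≤ n) (hk : 2 ≤ k)
    (S : Fin n → Set ℕ) (T : Fin k → Set ℕ) (ξ : Fin n → ℝ) (η : Fin k → ℝ)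
    (hS : ∀ i, (S i).Infinite) (hSd : Pairwise (Function.onFun Disjoint S))
    (hSu : (⋃ i, S i) = Set.univ)
    (hT : ∀ j, (T j).Infinite) (hTd : Pairwise (Function.onFun Disjoint T))
    (hTu : (⋃ j, T j) = Set.univ)
    (hξ : StrictMono ξ) (hη : StrictMono η)
    (hxS : Tendsto (fun m => x m - ∑ i, (S i).indicator (fun _ => ξ i) m) atTop (𝓝 0))
    (hyT : Tendsto (fun m => y m - ∑ j, (T j).indicator (fun _ => η j) m) atTop (𝓝 0)) :
    (∃ z ∈ Submodule.span ℝ ({x, y} : Set (ℕ → ℝ)),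
        (accPts z).Finite ∧ (accPts z).ncard = {p : Fin n × Fin k | (S p.1 ∩ T p.2).Infinite}.ncard) ∧
    (∃ z ∈ Submodule.span ℝ ({x, y} : Set (ℕ → ℝ)),
        (accPts z).Finite ∧ (accPts z).ncard < {p : Fin n × Fin k | (S p.1 ∩ T p.2).Infinite}.ncard) ∧
    (∀ z ∈ Submodule.span ℝ ({x, y} : Set (ℕ → ℝ)),
        (accPts z).Finite ∧ (accPts z).ncard ≤ {p : Fin n × Fin k | (S p.1 ∩ T p.2).Infinite}.ncard) := by
  classical
  set E : Set (Fin n × Fin k) := {p : Fin n × Fin k | (S p.1 ∩ T p.2).Infinite} with hEdef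
  have hEfin : E.Finite := Set.toFinite _
  -- the partition functions
  have hiS : ∀ m, ∃ i, m ∈ S i := by
    intro m
    have : m ∈ ⋃ i, S i := hSu.symm ▸ Set.mem_univ m
    exact Set.mem_iUnion.mp this
  have hjT : ∀ m, ∃ j, m ∈ T j := by
    intro m
    have : m ∈ ⋃ j, T j := hTu.symm ▸ Set.mem_univ m
    exact Set.mem_iUnion.mp this
  set iS : ℕ → Fin n := fun m => (hiS m).choose with hiSdef
  set jT : ℕ → Fin k := fun m => (hjT m).choose with hjTdef
  have hiSm : ∀ m, m ∈ S (iS m) := fun m => (hiS m).choose_spec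
  have hjTm : ∀ m, m ∈ T (jT m) := fun m => (hjT m).choose_spec
  have hiSu : ∀ m i, m ∈ S i → iS m = i := by
    intro m i hmi
    by_contra hne
    exact Set.disjoint_left.mp (hSd hne) (hiSm m) hmi
  have hjTu : ∀ m j, m ∈ T j → jT m = j := by
    intro m j hmj
    by_contra hne
    exact Set.disjoint_left.mp (hTd hne) (hjTm m) hmj
  set f : ℕ → Fin n × Fin k := fun m => (iS m, jT m) with hfdef
  have hfiber : ∀ p : Fin n × Fin k, {m | f m = p} = S p.1 ∩ T p.2 := by
    intro p
    ext m
    constructor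
    · rintro rfl
      exact ⟨hiSm m, hjTm m⟩
    · rintro ⟨h1, h2⟩
      exact Prod.ext (hiSu m _ h1) (hjTu m _ h2)
  -- sum simplification
  have hsumS : ∀ m, (∑ i, (S i).indicator (fun _ => ξ i) m) = ξ (iS m) := by
    intro m
    rw [Finset.sum_eq_single (iS m)]
    · exact Set.indicator_of_mem (hiSm m) _
    · intro i _ hne
      exact Set.indicator_of_notMem (fun hmem => hne ((hiSu m i hmem) ▸ rfl)) _
    · intro h; exact absurd (Finset.mem_univ _) h
  have hsumT : ∀ m, (∑ j, (T j).indicator (fun _ => η j) m) = η (jT m) := by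
    intro m
    rw [Finset.sum_eq_single (jT m)]
    · exact Set.indicator_of_mem (hjTm m) _
    · intro j _ hne
      exact Set.indicator_of_notMem (fun hmem => hne ((hjTu m j hmem) ▸ rfl)) _
    · intro h; exact absurd (Finset.mem_univ _) h
  -- the main description of accPts for elements of the span
  have main : ∀ a b : ℝ,
      accPts (a • x + b • y) = (fun p : Fin n × Fin k => a * ξ p.1 + b * η p.2) '' E := by
    intro a b
    have h1 : Tendsto (fun m => a * (x m - ξ (iS m))) atTop (𝓝 0) := by
      have := hxS.const_mul a
      rw [mul_zero] at this
      simp only [hsumS] at this ⊢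
      exact this
    have h2 : Tendsto (fun m => b * (y m - η (jT m))) atTop (𝓝 0) := by
      have := hyT.const_mul b
      rw [mul_zero] at this
      simp only [hsumT] at this ⊢
      exact this
    have key : Tendsto (fun m => (a • x + b • y) m -
        ((fun p : Fin n × Fin k => a * ξ p.1 + b * η p.2) (f m))) atTop (𝓝 0) := by
      have h12 := h1.add h2
      rw [add_zero] at h12
      have heq : (fun m => (a • x + b • y) m -
          ((fun p : Fin n × Fin k => a * ξ p.1 + b * η p.2) (f m)))
          = fun m => a * (x m - ξ (iS m)) + b * (y m - η (jT m)) := by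
        funext m
        simp only [Pi.add_apply, Pi.smul_apply, smul_eq_mul, hfdef]
        ring
      rw [heq]
      exact h12
    rw [accPts_eq_image_aux (a • x + b • y) f (fun p => a * ξ p.1 + b * η p.2) key]
    congr 1
    ext p
    simp only [hfiber, hEdef, Set.mem_setOf_eq]
  -- find a making the map injective
  obtain ⟨a, ha⟩ : ∃ a : ℝ, a ∉ Set.range (fun q : (Fin n × Fin n) × Fin k × Fin k =>
      (η q.2.2 - η q.2.1) / (ξ q.1.1 - ξ q.1.2)) :=
    (Set.finite_range _).infinite_compl.nonempty
  have ginj : Function.Injective (fun p : Fin n × Fin k => a * ξ p.1 + 1 * η p.2) := by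
    intro p q hpq
    simp only [one_mul] at hpq
    by_cases hi : p.1 = q.1
    · have hj : η p.2 = η q.2 := by rw [hi] at hpq; linarith
      exact Prod.ext hi (hη.injective hj)
    · exfalso
      apply ha
      refine ⟨((p.1, q.1), (p.2, q.2)), ?_⟩
      have hne : ξ p.1 - ξ q.1 ≠ 0 := sub_ne_zero.mpr (fun h => hi (hξ.injective h))
      field_simp
      linarith
  -- |E| ≥ n
  have hmap : ∀ i : Fin n, ∃ j, (S i ∩ T j).Infinite := by
    intro i
    by_contra hc
    push_neg at hc
    have hsub : S i ⊆ ⋃ j, (S i ∩ T j) := by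
      intro m hm
      obtain ⟨j, hj⟩ := hjT m
      exact Set.mem_iUnion.mpr ⟨j, hm, hj⟩
    exact hS i ((Set.finite_iUnion hc).subset hsub)
  choose jc hjc using hmap
  have hnE : n ≤ E.ncard := by
    have hinj : Function.Injective (fun i : Fin n => ((i, jc i) : Fin n × Fin k)) :=
      fun i i' h => congrArg Prod.fst h
    have hrange : Set.range (fun i : Fin n => ((i, jc i) : Fin n × Fin k)) ⊆ E := by
      rintro _ ⟨i, rfl⟩; exact hjc i
    have h1 : (Set.range (fun i : Fin n => ((i, jc i) : Fin n × Fin k))).ncard = n := by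
      rw [← Set.image_univ, Set.ncard_image_of_injective _ hinj, Set.ncard_univ,
        Nat.card_eq_fintype_card, Fintype.card_fin]
    calc n = _ := h1.symm
      _ ≤ E.ncard := Set.ncard_le_ncard hrange hEfin
  have hEne : E.Nonempty := ⟨(⟨0, by omega⟩, jc ⟨0, by omega⟩), hjc _⟩
  refine ⟨?_, ?_, ?_⟩
  · -- equality: z = a • x + 1 • y
    refine ⟨a • x + (1:ℝ) • y, Submodule.mem_span_pair.mpr ⟨a, 1, rfl⟩, ?_, ?_⟩
    · rw [main a 1]; exact hEfin.image _
    · rw [main a 1, Set.ncard_image_of_injective _ ginj]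
  · -- strict: z = 0
    refine ⟨0, Submodule.zero_mem _, ?_, ?_⟩
    · have h0 : (0 : ℕ → ℝ) = (0:ℝ) • x + (0:ℝ) • y := by simp
      rw [h0, main 0 0]
      exact hEfin.image _
    · have h0 : (0 : ℕ → ℝ) = (0:ℝ) • x + (0:ℝ) • y := by simp
      rw [h0, main 0 0]
      have himg : (fun p : Fin n × Fin k => 0 * ξ p.1 + 0 * η p.2) '' E = {(0:ℝ)} := by
        simp only [zero_mul, add_zero]
        exact hEne.image_const 0
      rw [himg, Set.ncard_singleton]
      omega
  · intro z hz
    obtain ⟨a', b', rfl⟩ := Submodule.mem_span_pair.mp hz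
    rw [main a' b']
    exact ⟨hEfin.image _, Set.ncard_image_le hEfin⟩
end
end

section
/- Let A ⊆ ℕ\{1\} and suppose L(A) ∪ {0} contains a 2-dimensional linear subspace M. Set n_1 = min{ |L_z| : z ∈ M, z ≠ 0 } and n_2 = max{ |L_z| : z ∈ M }. Then the open interval (n_2 − n_1, n_2) intersects A. -/
open Filter Topology Set ENNReal

noncomputable section

/-- The space ℓ∞ of bounded real sequences. -/
abbrev Linf : Type := ↥(lp (fun _ : ℕ => ℝ) ∞)

/-- Accumulation points of an element of ℓ∞. -/
def accPtsL (z : Linf) : Set ℝ := accPts (fun n => z n)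

/-! Let `x` realise the minimal number `n₁` of accumulation points and `y` the maximal `n₂`,
with `x, y` independent. The accumulation points of `α x + β y` are the image of the finite set `S`
of joint accumulation points of `(x, y)` under `(a, b) ↦ α a + β b`. A generic direction is
injective on `S`, so `|S| = n₂`. For the steepest slope `τ` of `S`, the shear
`p ↦ (p.1, τ p.1 - p.2)` maps `S` onto a chain of `ℝ × ℝ`, and a chain is shorter than the sum
of the sizes of its two projections: `|S| < |L_{τx-y}| + n₁`. The steepest segment collapses, so
`|L_{τx-y}| < |S|`. -/

section SubseqLimits

variable {X Y : Type*} [TopologicalSpace X] [TopologicalSpace Y]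

-- `accPts x` and `accPtsL z` unfold to `subseqLimits`, which the lemmas below use silently.
def subseqLimits (u : ℕ → X) : Set X :=
  {a | ∃ φ : ℕ → ℕ, StrictMono φ ∧ Tendsto (u ∘ φ) atTop (𝓝 a)}

theorem image_subseqLimits_subset {f : X → Y} (hf : Continuous f) (u : ℕ → X) :
    f '' subseqLimits u ⊆ subseqLimits (f ∘ u) := by
  rintro _ ⟨a, ⟨φ, hφ, hlim⟩, rfl⟩
  exact ⟨φ, hφ, (hf.tendsto a).comp hlim⟩

theorem subseqLimits_comp [FirstCountableTopology X] [T2Space Y] {f : X → Y}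
    (hf : Continuous f) {K : Set X} (hK : IsCompact K) {u : ℕ → X} (hu : ∀ n, u n ∈ K) :
    subseqLimits (f ∘ u) = f '' subseqLimits u := by
  refine (Subset.antisymm ?_ (image_subseqLimits_subset hf u))
  rintro b ⟨φ, hφ, hlim⟩
  obtain ⟨a, -, ψ, hψ, hlimψ⟩ := hK.tendsto_subseq fun n => hu (φ n)
  refine ⟨a, ⟨φ ∘ ψ, hφ.comp hψ, hlimψ⟩, ?_⟩
  exact tendsto_nhds_unique ((hf.tendsto a).comp hlimψ) (hlim.comp hψ.tendsto_atTop)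

theorem subseqLimits_prodMk_subset (u : ℕ → X) (v : ℕ → Y) :
    subseqLimits (fun n => (u n, v n)) ⊆ subseqLimits u ×ˢ subseqLimits v :=
  fun p hp => ⟨image_subseqLimits_subset continuous_fst _ ⟨p, hp, rfl⟩,
    image_subseqLimits_subset continuous_snd _ ⟨p, hp, rfl⟩⟩

end SubseqLimits

theorem Linf.apply_mem_closedBall (z : Linf) (n : ℕ) : z n ∈ Metric.closedBall (0 : ℝ) ‖z‖ := by
  simpa using lp.norm_apply_le_norm ENNReal.top_ne_zero z n

def jointAccPts (x y : Linf) : Set (ℝ × ℝ) := subseqLimits fun n => (x n, y n)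

theorem accPtsL_smul_add_smul (x y : Linf) (α β : ℝ) :
    accPtsL (α • x + β • y) = (fun p : ℝ × ℝ => α * p.1 + β * p.2) '' jointAccPts x y := by
  have hK : IsCompact (Metric.closedBall (0 : ℝ) ‖x‖ ×ˢ Metric.closedBall (0 : ℝ) ‖y‖) :=
    (isCompact_closedBall _ _).prod (isCompact_closedBall _ _)
  exact subseqLimits_comp (u := fun n => (x n, y n))
    (f := fun p : ℝ × ℝ => α * p.1 + β * p.2) (by fun_prop) hK
    fun n => ⟨x.apply_mem_closedBall n, y.apply_mem_closedBall n⟩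

theorem accPtsL_smul (c : ℝ) (z : Linf) : accPtsL (c • z) = (c * ·) '' accPtsL z :=
  subseqLimits_comp (u := fun n => z n) (continuous_const_mul c) (isCompact_closedBall _ _)
    z.apply_mem_closedBall

theorem jointAccPts_finite {x y : Linf} (hx : (accPtsL x).Finite) (hy : (accPtsL y).Finite) :
    (jointAccPts x y).Finite :=
  (hx.prod hy).subset (subseqLimits_prodMk_subset _ _)

section Slope

variable {p q : ℝ × ℝ}

theorem div_le_iff_mul_fst_sub_snd_le (h : p.1 < q.1) (τ : ℝ) :
    (q.2 - p.2) / (q.1 - p.1) ≤ τ ↔ τ * p.1 - p.2 ≤ τ * q.1 - q.2 := by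
  rw [div_le_iff₀ (sub_pos.2 h)]
  constructor <;> intro <;> linarith

theorem div_eq_iff_mul_fst_sub_snd_eq (h : p.1 < q.1) (τ : ℝ) :
    (q.2 - p.2) / (q.1 - p.1) = τ ↔ τ * p.1 - p.2 = τ * q.1 - q.2 := by
  rw [div_eq_iff (sub_pos.2 h).ne']
  constructor <;> intro <;> linarith

end Slope

namespace Finset

variable {α β : Type*} [LinearOrder α] [LinearOrder β]

theorem card_filter_lt_lt_card {s : Finset α} {a : α} (ha : a ∈ s) : #{x ∈ s | x < a} < #s :=
  card_lt_card (filter_ssubset.2 ⟨a, ha, lt_irrefl a⟩)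

theorem card_filter_lt_le_of_le (s : Finset α) {a b : α} (hab : a ≤ b) :
    #{x ∈ s | x < a} ≤ #{x ∈ s | x < b} :=
  card_le_card (monotone_filter_right s fun _ _ hx => hx.trans_le hab)

theorem card_filter_lt_lt_of_lt {s : Finset α} {a b : α} (ha : a ∈ s) (hab : a < b) :
    #{x ∈ s | x < a} < #{x ∈ s | x < b} :=
  card_lt_card <| (ssubset_iff_of_subset (monotone_filter_right s fun _ _ hx => hx.trans hab)).2
    ⟨a, mem_filter.2 ⟨ha, hab⟩, by simp⟩

theorem card_add_one_le_of_isChain {T : Finset (α × β)} (hT : IsChain (· ≤ ·) (T : Set (α × β)))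
    (hne : T.Nonempty) : #T + 1 ≤ #(T.image Prod.fst) + #(T.image Prod.snd) := by
  set rank := fun p : α × β =>
    #{a ∈ T.image Prod.fst | a < p.1} + #{b ∈ T.image Prod.snd | b < p.2}
  have rank_lt : ∀ p ∈ T, ∀ q ∈ T, p < q → rank p < rank q := by
    intro p hp q hq hpq
    rcases Prod.lt_iff.1 hpq with ⟨h1, h2⟩ | ⟨h1, h2⟩
    · exact Nat.add_lt_add_of_lt_of_le (card_filter_lt_lt_of_lt (mem_image_of_mem _ hp) h1)
        (card_filter_lt_le_of_le _ h2)
    · exact Nat.add_lt_add_of_le_of_lt (card_filter_lt_le_of_le _ h1)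
        (card_filter_lt_lt_of_lt (mem_image_of_mem _ hp) h2)
  have hinj : Set.InjOn rank T := by
    intro p hp q hq hpq
    by_contra hne
    rcases hT.lt_of_le hp hq hne with h | h
    · exact (rank_lt p hp q hq h).ne hpq
    · exact (rank_lt q hq p hp h).ne' hpq
  have hmaps : Set.MapsTo rank T (range (#(T.image Prod.fst) + #(T.image Prod.snd) - 1)) := by
    intro p hp
    have h1 := card_filter_lt_lt_card (mem_image_of_mem Prod.fst hp)
    have h2 := card_filter_lt_lt_card (mem_image_of_mem Prod.snd hp)
    simp only [coe_range, Set.mem_Iio, rank]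
    omega
  have hle := card_le_card_of_injOn rank hmaps hinj
  have hpos := (hne.image Prod.fst).card_pos
  rw [card_range] at hle
  omega

def slopes (S : Finset (ℝ × ℝ)) : Finset ℝ :=
  {pq ∈ S ×ˢ S | pq.1.1 < pq.2.1}.image fun pq => (pq.2.2 - pq.1.2) / (pq.2.1 - pq.1.1)

theorem div_mem_slopes {S : Finset (ℝ × ℝ)} {p q : ℝ × ℝ} (hp : p ∈ S) (hq : q ∈ S)
    (h : p.1 < q.1) : (q.2 - p.2) / (q.1 - p.1) ∈ slopes S :=
  mem_image.2 ⟨(p, q), mem_filter.2 ⟨mem_product.2 ⟨hp, hq⟩, h⟩, rfl⟩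

theorem exists_injOn_mul_fst_sub_snd (S : Finset (ℝ × ℝ)) :
    ∃ τ : ℝ, Set.InjOn (fun p : ℝ × ℝ => τ * p.1 - p.2) S := by
  obtain ⟨τ, hτ⟩ := Infinite.exists_notMem_finset (slopes S)
  have key : ∀ p ∈ S, ∀ q ∈ S, p.1 < q.1 → τ * p.1 - p.2 ≠ τ * q.1 - q.2 :=
    fun p hp q hq h heq => hτ ((div_eq_iff_mul_fst_sub_snd_eq h τ).2 heq ▸ div_mem_slopes hp hq h)
  refine ⟨τ, fun p hp q hq hpq => ?_⟩
  rcases lt_trichotomy p.1 q.1 with h | h | h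
  · exact absurd hpq (key p hp q hq h)
  · exact Prod.ext h (by simp only [h] at hpq; linarith)
  · exact absurd hpq.symm (key q hq p hp h)

theorem exists_isChain_shear_not_injOn {S : Finset (ℝ × ℝ)}
    (hS : 1 < #(S.image Prod.fst)) :
    ∃ τ : ℝ, IsChain (· ≤ ·) (↑(S.image fun p : ℝ × ℝ => (p.1, τ * p.1 - p.2)) : Set (ℝ × ℝ)) ∧
      ¬ Set.InjOn (fun p : ℝ × ℝ => τ * p.1 - p.2) S := by
  obtain ⟨a, ha, b, hb, hab⟩ := one_lt_card.1 hS
  obtain ⟨p, hp, rfl⟩ := mem_image.1 ha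
  obtain ⟨q, hq, rfl⟩ := mem_image.1 hb
  have hne : (slopes S).Nonempty := by
    rcases hab.lt_or_gt with h | h
    exacts [⟨_, div_mem_slopes hp hq h⟩, ⟨_, div_mem_slopes hq hp h⟩]
  set τ := (slopes S).max' hne
  have mono : ∀ p ∈ S, ∀ q ∈ S, p.1 < q.1 → τ * p.1 - p.2 ≤ τ * q.1 - q.2 :=
    fun p hp q hq h => (div_le_iff_mul_fst_sub_snd_le h τ).1 (le_max' _ _ (div_mem_slopes hp hq h))
  refine ⟨τ, ?_, ?_⟩
  · rw [coe_image]
    rintro _ ⟨p, hp, rfl⟩ _ ⟨q, hq, rfl⟩ -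
    rcases lt_trichotomy p.1 q.1 with h | h | h
    · exact Or.inl ⟨h.le, mono p hp q hq h⟩
    · rcases le_total p.2 q.2 with h' | h'
      · exact Or.inr ⟨h.ge, by simp only [h]; linarith⟩
      · exact Or.inl ⟨h.le, by simp only [h]; linarith⟩
    · exact Or.inr ⟨h.le, mono q hq p hp h⟩
  · obtain ⟨⟨p, q⟩, hpq, hτ⟩ := mem_image.1 (max'_mem _ hne)
    obtain ⟨hpqS, hlt⟩ := mem_filter.1 hpq
    obtain ⟨hp, hq⟩ := mem_product.1 hpqS
    exact fun hinj => hlt.ne (congrArg Prod.fst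
      (hinj hp hq ((div_eq_iff_mul_fst_sub_snd_eq hlt τ).1 hτ)))

theorem exists_lt_card_image_mul_fst_sub_snd_lt {S : Finset (ℝ × ℝ)}
    (hS : 1 < #(S.image Prod.fst)) :
    ∃ τ : ℝ, #S < #(S.image fun p : ℝ × ℝ => τ * p.1 - p.2) + #(S.image Prod.fst) ∧
      #(S.image fun p : ℝ × ℝ => τ * p.1 - p.2) < #S := by
  obtain ⟨τ, hchain, hninj⟩ := exists_isChain_shear_not_injOn hS
  have hshear : Set.InjOn (fun p : ℝ × ℝ => (p.1, τ * p.1 - p.2)) S := by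
    intro p _ q _ h
    simp only [Prod.mk.injEq] at h
    exact Prod.ext h.1 (by linarith [h.1, h.2, congrArg (τ * ·) h.1])
  have hSne : S.Nonempty := image_nonempty.1 (card_pos.1 (by omega : 0 < #(S.image Prod.fst)))
  have hcard := card_add_one_le_of_isChain hchain (hSne.image _)
  rw [card_image_of_injOn hshear, image_image, image_image] at hcard
  change #S + 1 ≤ #(S.image Prod.fst) + #(S.image fun p : ℝ × ℝ => τ * p.1 - p.2) at hcard
  refine ⟨τ, by omega,
    lt_of_le_of_ne card_image_le (mt card_image_iff.1 hninj)⟩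

end Finset

theorem Submodule.exists_linearIndependent_pair {K V : Type*} [DivisionRing K] [AddCommGroup V]
    [Module K V] {M : Submodule K V} (hM : 1 < Module.finrank K M) {x : V} (hx : x ∈ M)
    (hx0 : x ≠ 0) : ∃ y ∈ M, LinearIndependent K ![x, y] := by
  obtain ⟨y, hy⟩ := exists_linearIndependent_pair_of_one_lt_finrank hM
    (x := ⟨x, hx⟩) (by simpa using hx0)
  refine ⟨y, y.2, ?_⟩
  have hmap := hy.map' M.subtype M.ker_subtype
  rwa [← FinVec.map_eq] at hmap

open scoped Finset in
theorem exists_mem_between_of_linearIndependent {A : Set ℕ} {M : Submodule ℝ Linf}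
    (hM : ∀ z ∈ M, z ≠ 0 → (accPtsL z).Finite ∧ (accPtsL z).ncard ∈ A) {x y : Linf}
    (hmax : ∀ z ∈ M, (accPtsL z).ncard ≤ (accPtsL y).ncard) (hx : x ∈ M) (hy : y ∈ M)
    (hxy : LinearIndependent ℝ ![x, y]) (hx2 : 2 ≤ (accPtsL x).ncard) :
    ∃ m ∈ A, (accPtsL y).ncard - (accPtsL x).ncard < m ∧ m < (accPtsL y).ncard := by
  have hfin := jointAccPts_finite (hM x hx (hxy.ne_zero 0)).1
    (hM y hy (by simpa using hxy.ne_zero 1)).1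
  set S := hfin.toFinset
  have hcount : ∀ α β : ℝ,
      (accPtsL (α • x + β • y)).ncard = #(S.image fun p : ℝ × ℝ => α * p.1 + β * p.2) := by
    intro α β
    rw [accPtsL_smul_add_smul, ← Set.ncard_coe_finset, Finset.coe_image, hfin.coe_toFinset]
  have hfst : (accPtsL x).ncard = #(S.image Prod.fst) := by simpa using hcount 1 0
  have hsnd : (accPtsL y).ncard = #(S.image Prod.snd) := by simpa using hcount 0 1
  have hcomb : ∀ τ : ℝ, (accPtsL (τ • x + (-1 : ℝ) • y)).ncard =
      #(S.image fun p : ℝ × ℝ => τ * p.1 - p.2) := fun τ => by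
    simpa [← sub_eq_add_neg] using hcount τ (-1)
  have hcombM : ∀ τ : ℝ, τ • x + (-1 : ℝ) • y ∈ M := fun τ =>
    M.add_mem (M.smul_mem τ hx) (M.smul_mem _ hy)
  have hS : #S = (accPtsL y).ncard := by
    obtain ⟨τ, hτ⟩ := S.exists_injOn_mul_fst_sub_snd
    refine le_antisymm ?_ (hsnd ▸ Finset.card_image_le)
    rw [← Finset.card_image_of_injOn hτ, ← hcomb τ]
    exact hmax _ (hcombM τ)
  obtain ⟨τ, hlo, hhi⟩ := S.exists_lt_card_image_mul_fst_sub_snd_lt (by omega)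
  have hz0 : τ • x + (-1 : ℝ) • y ≠ 0 := fun h => by
    simpa using (LinearIndependent.pair_iff.1 hxy _ _ h).2
  have hfst_le : #(S.image Prod.fst) ≤ #S := Finset.card_image_le
  refine ⟨_, (hM _ (hcombM τ) hz0).2, ?_, ?_⟩ <;> rw [hcomb τ] <;> omega

theorem interval_intersects_of_dim_two (A : Set ℕ) (hA : A ⊆ {n | 2 ≤ n})
    (M : Submodule ℝ Linf) (hdim : Module.finrank ℝ M = 2)
    (hM : ∀ z ∈ M, z ≠ 0 → (accPtsL z).Finite ∧ (accPtsL z).ncard ∈ A)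
    (n₁ n₂ : ℕ)
    (hn₁ : (∃ z ∈ M, z ≠ 0 ∧ (accPtsL z).ncard = n₁) ∧
           (∀ z ∈ M, z ≠ 0 → n₁ ≤ (accPtsL z).ncard))
    (hn₂ : (∃ z ∈ M, (accPtsL z).ncard = n₂) ∧
           (∀ z ∈ M, (accPtsL z).ncard ≤ n₂)) :
    ∃ m ∈ A, n₂ - n₁ < m ∧ m < n₂ := by
  obtain ⟨⟨x, hxM, hx0, rfl⟩, hmin⟩ := hn₁
  obtain ⟨⟨z, hzM, rfl⟩, hmax⟩ := hn₂
  obtain ⟨y, hyM, hyz, hxy⟩ : ∃ y ∈ M, (accPtsL y).ncard = (accPtsL z).ncard ∧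
      LinearIndependent ℝ ![x, y] := by
    by_cases hxz : LinearIndependent ℝ ![x, z]
    · exact ⟨z, hzM, rfl, hxz⟩
    -- otherwise `z` is a multiple of `x`, so `n₁ = n₂`
    obtain ⟨c, rfl⟩ : ∃ c : ℝ, c • x = z := by
      rw [LinearIndependent.pair_symm_iff, linearIndependent_fin2] at hxz
      simpa [hx0] using hxz
    have hcx : (accPtsL (c • x)).ncard ≤ (accPtsL x).ncard :=
      accPtsL_smul c x ▸ Set.ncard_image_le (hM x hxM hx0).1
    obtain ⟨y, hyM, hxy⟩ := Submodule.exists_linearIndependent_pair (by omega) hxM hx0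
    have hy0 : y ≠ 0 := by simpa using hxy.ne_zero 1
    exact ⟨y, hyM, le_antisymm (hmax y hyM) (hcx.trans (hmin y hyM hy0)), hxy⟩
  rw [← hyz]
  exact exists_mem_between_of_linearIndependent hM (hyz ▸ hmax) hxM hyM hxy (hA (hM x hxM hx0).2)
end
end

section
/- Let A ⊆ ℕ\{1\}. If L(A) ∪ {0} contains an infinite-dimensional linear subspace of ℓ∞, then there exists k ≥ 1 such that A ∩ (A − k) is infinite, i.e., there are infinitely many a ∈ A with a + k ∈ A. -/
open Filter Topology Set ENNReal

noncomputable section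

/-!
Pick linearly independent `z₀, z₁, …` in the subspace and let `Xₙ ⊆ ℝⁿ` be the finite set of limit
points of `m ↦ (z₀ m, …, zₙ₋₁ m)`. The accumulation points of `∑ cᵢ zᵢ` are the image of `Xₙ`
under `x ↦ ∑ cᵢ xᵢ`, so every nonzero functional takes a number of values on `Xₙ` that lies in
`A`; as `0, 1 ∉ A`, no nonzero functional is constant on `Xₙ`, whence `|Xₙ| ≥ n`. A generic
functional is injective on `Xₙ`, so `|Xₙ| ∈ A`; a generic functional vanishing on a direction `v`
separates exactly the lines parallel to `v`, so `|Xₙ| - e ∈ A`, where `e` is the number of points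
lost when projecting `Xₙ` along `v`. The least positive such `e` does not increase with `n`: a
direction `v` for `Xₙ` lifts to `(v, δ)` for `Xₙ₊₁ ⊆ Xₙ × ℝ` with no larger loss, taking for `δ`
the steepest slope between two points of `Xₙ₊₁` lying over a common `v`-line. So one `k` occurs for
all large `n`, and `a = |Xₙ| - k` gives infinitely many `a` with `a, a + k ∈ A`.
-/

open Module

section DualCounting

variable {K V : Type*} [Field K] [AddCommGroup V] [Module K V]

lemma exists_dual_ne_zero_injOn [Infinite K] [Nontrivial V] {Y : Set V} (hY : Y.Finite) :
    ∃ g : Dual K V, g ≠ 0 ∧ InjOn g Y := by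
  have := hY.to_subtype
  obtain ⟨w, hw⟩ := exists_ne (0 : V)
  let d : Option {p : Y × Y // p.1 ≠ p.2} → V
    | none => w
    | some p => p.1.1 - p.1.2
  have hd : ∀ i, d i ≠ 0
    | none => hw
    | some ⟨(x, y), hxy⟩ => sub_ne_zero.2 (Subtype.coe_injective.ne hxy)
  obtain ⟨g, hg⟩ := Module.exists_dual_forall_apply_ne_zero (K := K) d hd
  refine ⟨g, fun h => hg none (by simp [h]), fun x hx y hy hxy => by_contra fun hne => ?_⟩
  exact hg (some ⟨(⟨x, hx⟩, ⟨y, hy⟩), by simpa using hne⟩) (by simp [d, hxy])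

variable {A : Set ℕ} {X : Set V}

lemma ncard_mem_of_forall_dual [Infinite K] [Nontrivial V] (hX : X.Finite)
    (hA : ∀ f : Dual K V, f ≠ 0 → (f '' X).ncard ∈ A) : X.ncard ∈ A := by
  obtain ⟨g, hg, hinj⟩ := exists_dual_ne_zero_injOn (K := K) hX
  simpa [hinj.ncard_image] using hA g hg

lemma ncard_image_mkQ_mem_of_forall_dual [Infinite K] (hX : X.Finite)
    (hA : ∀ f : Dual K V, f ≠ 0 → (f '' X).ncard ∈ A) {W : Submodule K V} (hW : W ≠ ⊤) :
    (W.mkQ '' X).ncard ∈ A := by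
  have := Submodule.Quotient.nontrivial_iff.2 hW
  refine ncard_mem_of_forall_dual (K := K) (hX.image _) fun g hg => ?_
  have hgW : g ∘ₗ W.mkQ ≠ 0 := fun h =>
    hg <| (LinearMap.cancel_right W.mkQ_surjective).1 (by rw [h, LinearMap.zero_comp])
  rw [image_image]
  exact hA _ hgW

lemma finrank_le_ncard_of_forall_dual [FiniteDimensional K V] (hX : X.Finite)
    (h : ∀ f : Dual K V, f ≠ 0 → 2 ≤ (f '' X).ncard) : finrank K V ≤ X.ncard := by
  have := hX.fintype
  let restrict : Dual K V →ₗ[K] (X → K) := LinearMap.pi fun x => Dual.eval K V x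
  have hinj : Function.Injective restrict := by
    refine (injective_iff_map_eq_zero _).2 fun f hf => by_contra fun hne => ?_
    have hsub : f '' X ⊆ {0} := by
      rintro _ ⟨x, hx, rfl⟩
      exact congr_fun hf ⟨x, hx⟩
    have := (ncard_le_ncard hsub).trans (ncard_singleton (0 : K)).le
    have := h f hne
    omega
  calc finrank K V = finrank K (Dual K V) := Subspace.dual_finrank_eq.symm
    _ ≤ finrank K (X → K) := LinearMap.finrank_le_finrank_of_injective hinj
    _ = X.ncard := by
      rw [finrank_fintype_fun_eq_card, ← Nat.card_eq_fintype_card, Nat.card_coe_set_eq]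

lemma span_singleton_ne_top_of_two_le_finrank (hV : 2 ≤ finrank K V) (v : V) :
    K ∙ v ≠ ⊤ := by
  intro h
  have := finrank_span_le_card (R := K) ({v} : Set V)
  rw [h, finrank_top] at this
  simp at this
  omega

end DualCounting

section Excess

variable (K : Type*) {V V' : Type*} [Field K] [AddCommGroup V] [Module K V]
  [AddCommGroup V'] [Module K V']

def excessAlong (X : Set V) (v : V) : ℕ := X.ncard - ((K ∙ v).mkQ '' X).ncard

variable {K}

lemma one_le_excessAlong_iff {X : Set V} (hX : X.Finite) {v : V} :
    1 ≤ excessAlong K X v ↔ ∃ x ∈ X, ∃ y ∈ X, x - y ∈ K ∙ v ∧ x ≠ y := by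
  have hle := ncard_image_le (f := (K ∙ v).mkQ) hX
  have : 1 ≤ excessAlong K X v ↔ ((K ∙ v).mkQ '' X).ncard ≠ X.ncard := by
    unfold excessAlong; omega
  simp only [this, Ne, ncard_image_iff hX, InjOn, Submodule.mkQ_apply,
    Submodule.Quotient.eq]
  push Not
  rfl

lemma excessAlong_image_linearEquiv (e : V ≃ₗ[K] V') (X : Set V) (v : V) :
    excessAlong K (e '' X) (e v) = excessAlong K X v := by
  let q := Submodule.Quotient.equiv (K ∙ v) (K ∙ e v) e (by simp [Submodule.map_span])
  have hq : (K ∙ e v).mkQ ∘ e = q ∘ (K ∙ v).mkQ := rfl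
  rw [excessAlong, excessAlong, ← image_comp, hq, image_comp, q.injective.injOn.ncard_image,
    e.injective.injOn.ncard_image]

lemma ncard_sub_excessAlong_mem_of_forall_dual [Infinite K] {A : Set ℕ} {X : Set V}
    (hX : X.Finite) (hA : ∀ f : Dual K V, f ≠ 0 → (f '' X).ncard ∈ A)
    (hV : 2 ≤ finrank K V) (v : V) :
    X.ncard - excessAlong K X v ∈ A := by
  rw [excessAlong, Nat.sub_sub_self (ncard_image_le hX)]
  exact ncard_image_mkQ_mem_of_forall_dual hX hA (span_singleton_ne_top_of_two_le_finrank hV v)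

end Excess

section FiberMins

variable {α β γ : Type*} [LinearOrder γ] {f : α → β} {s : α → γ} {X : Set α}

def fiberMins (f : α → β) (s : α → γ) (X : Set α) : Set α :=
  {x ∈ X | ∀ y ∈ X, f y = f x → s x ≤ s y}

lemma fiberMins_subset : fiberMins f s X ⊆ X := sep_subset _ _

lemma image_fiberMins (hX : X.Finite) : f '' fiberMins f s X = f '' X := by
  refine (image_mono fiberMins_subset).antisymm ?_
  rintro _ ⟨x, hx, rfl⟩
  obtain ⟨m, ⟨hmX, hm⟩, hmin⟩ :=
    exists_min_image {y ∈ X | f y = f x} s (hX.subset (sep_subset _ _)) ⟨x, hx, rfl⟩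
  exact ⟨m, ⟨hmX, fun y hy hfy => hmin y ⟨hy, hfy.trans hm⟩⟩, hm⟩

lemma mem_diff_fiberMins {x : α} :
    x ∈ X \ fiberMins f s X ↔ x ∈ X ∧ ∃ y ∈ X, f y = f x ∧ s y < s x := by
  simp [fiberMins]

end FiberMins

section LiftingDirections

variable {K E : Type*} [Field K] [AddCommGroup E] [Module K E] {v : E} {δ : K} {φ : Dual K E}

lemma mem_span_singleton_iff_eq_smul (hφ : φ v = 1) {w : E} :
    w ∈ K ∙ v ↔ w = φ w • v := by
  refine ⟨fun hw => ?_, fun hw => Submodule.mem_span_singleton.2 ⟨_, hw.symm⟩⟩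
  obtain ⟨a, rfl⟩ := Submodule.mem_span_singleton.1 hw
  simp [hφ]

lemma fst_mem_span_singleton {w : E × K} (hw : w ∈ K ∙ (v, δ)) : w.1 ∈ K ∙ v := by
  obtain ⟨a, rfl⟩ := Submodule.mem_span_singleton.1 hw
  exact Submodule.mem_span_singleton.2 ⟨a, rfl⟩

lemma mem_span_singleton_prod_iff (hφ : φ v = 1) {w : E × K} :
    w ∈ K ∙ (v, δ) ↔ w.1 ∈ K ∙ v ∧ w.2 = δ * φ w.1 := by
  have hφ' : (φ ∘ₗ LinearMap.fst K E K) (v, δ) = 1 := hφ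
  rw [mem_span_singleton_iff_eq_smul hφ', mem_span_singleton_iff_eq_smul hφ, Prod.ext_iff]
  simp [mul_comm]

variable [LinearOrder K] {X : Set (E × K)}

lemma mkQ_injOn_fiberMins (hφ : φ v = 1) :
    InjOn (K ∙ (v, δ)).mkQ (fiberMins (K ∙ (v, δ)).mkQ (φ ∘ Prod.fst) X) := by
  intro p hp q hq hpq
  have hs : φ p.1 = φ q.1 := le_antisymm (hp.2 q hq.1 hpq.symm) (hq.2 p hp.1 hpq)
  have hφ' : (φ ∘ₗ LinearMap.fst K E K) (v, δ) = 1 := hφ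
  have hmem := (mem_span_singleton_iff_eq_smul hφ').1 ((Submodule.Quotient.eq _).1 hpq)
  simpa [hs, sub_eq_zero] using hmem

lemma fst_image_diff_fiberMins_subset :
    Prod.fst '' (X \ fiberMins (K ∙ (v, δ)).mkQ (φ ∘ Prod.fst) X) ⊆
      Prod.fst '' X \ fiberMins (K ∙ v).mkQ φ (Prod.fst '' X) := by
  rintro _ ⟨p, hp, rfl⟩
  obtain ⟨hpX, q, hq, hqp, hlt⟩ := mem_diff_fiberMins.1 hp
  have hline := fst_mem_span_singleton ((Submodule.Quotient.eq _).1 hqp)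
  exact mem_diff_fiberMins.2 ⟨mem_image_of_mem _ hpX, q.1, mem_image_of_mem _ hq,
    (Submodule.Quotient.eq _).2 hline, hlt⟩

def SlopesLE (φ : Dual K E) (v : E) (X : Set (E × K)) (δ : K) : Prop :=
  ∀ p ∈ X, ∀ q ∈ X, p.1 - q.1 ∈ K ∙ v → φ q.1 < φ p.1 →
    p.2 - q.2 ≤ δ * (φ p.1 - φ q.1)

variable [IsStrictOrderedRing K]

lemma snd_le_of_mem_diff_fiberMins (hφ : φ v = 1) (hδ : SlopesLE φ v X δ) {p p' : E × K}
    (hp : p ∈ X \ fiberMins (K ∙ (v, δ)).mkQ (φ ∘ Prod.fst) X) (hp' : p' ∈ X)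
    (hpp' : p'.1 = p.1) : p'.2 ≤ p.2 := by
  -- `p` shares a `(v, δ)`-line with a point `q` below it; were `p'` above `p`, the slope from
  -- `q` to `p'` would exceed `δ`.
  obtain ⟨hpX, q, hq, hqp, hlt⟩ := mem_diff_fiberMins.1 hp
  obtain ⟨hline, hslope⟩ :=
    (mem_span_singleton_prod_iff hφ).1 ((Submodule.Quotient.eq _).1 hqp.symm)
  have := hδ p' hp' q hq (by rwa [hpp']) (by rwa [hpp'])
  simp only [Prod.fst_sub, Prod.snd_sub, map_sub, Function.comp] at hslope hlt this
  rw [hpp'] at this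
  linarith

lemma fst_injOn_diff_fiberMins (hφ : φ v = 1) (hδ : SlopesLE φ v X δ) :
    InjOn Prod.fst (X \ fiberMins (K ∙ (v, δ)).mkQ (φ ∘ Prod.fst) X) := fun _ hp _ hq hpq =>
  Prod.ext hpq (le_antisymm (snd_le_of_mem_diff_fiberMins hφ hδ hq hp.1 hpq)
    (snd_le_of_mem_diff_fiberMins hφ hδ hp hq.1 hpq.symm))

lemma excessAlong_prod_le (hφ : φ v = 1) (hX : X.Finite) (hδ : SlopesLE φ v X δ) :
    excessAlong K X (v, δ) ≤ excessAlong K (Prod.fst '' X) v := by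
  -- The lowest points `M'` of the `(v, δ)`-lines represent them bijectively; the other points of
  -- `X` inject into `fst '' X \ M`, and the lowest points `M` of the `v`-lines cover every line.
  set M' := fiberMins (K ∙ (v, δ)).mkQ (φ ∘ Prod.fst) X
  set M := fiberMins (K ∙ v).mkQ φ (Prod.fst '' X)
  have hM'X : M' ⊆ X := fiberMins_subset
  have hMX : M ⊆ Prod.fst '' X := fiberMins_subset
  have hM' : M'.ncard ≤ ((K ∙ (v, δ)).mkQ '' X).ncard := by
    rw [← (mkQ_injOn_fiberMins hφ).ncard_image]
    exact ncard_le_ncard (image_mono hM'X) (hX.image _)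
  have hdiff : (X \ M').ncard ≤ (Prod.fst '' X \ M).ncard := by
    rw [← (fst_injOn_diff_fiberMins hφ hδ).ncard_image]
    exact ncard_le_ncard fst_image_diff_fiberMins_subset ((hX.image _).sdiff)
  have hM : ((K ∙ v).mkQ '' (Prod.fst '' X)).ncard ≤ M.ncard := by
    rw [← image_fiberMins (s := φ) (hX.image _)]
    exact ncard_image_le ((hX.image _).subset hMX)
  rw [ncard_sdiff hM'X (hX.subset hM'X), ncard_sdiff hMX ((hX.image _).subset hMX)] at hdiff
  have := ncard_le_ncard hM'X hX
  have := ncard_le_ncard hMX (hX.image _)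
  unfold excessAlong
  omega

theorem exists_excessAlong_prod_le (hX : X.Finite) (he : 1 ≤ excessAlong K (Prod.fst '' X) v) :
    ∃ δ : K, 1 ≤ excessAlong K X (v, δ) ∧
      excessAlong K X (v, δ) ≤ excessAlong K (Prod.fst '' X) v := by
  obtain ⟨_, ⟨p, hp, rfl⟩, _, ⟨q, hq, rfl⟩, hpq, hne⟩ :=
    (one_le_excessAlong_iff (hX.image _)).1 he
  have hv : v ≠ 0 := by
    rintro rfl
    simp [sub_eq_zero, hne] at hpq
  obtain ⟨φ, hφ⟩ := Projective.exists_dual_eq_one K hv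
  set P := {pq ∈ X ×ˢ X | pq.1.1 - pq.2.1 ∈ K ∙ v ∧ φ pq.2.1 < φ pq.1.1}
  have hPne : P.Nonempty := by
    have hφpq : φ p.1 ≠ φ q.1 := fun h => hne <| sub_eq_zero.1 <| by
      rw [(mem_span_singleton_iff_eq_smul hφ).1 hpq, map_sub, h, sub_self, zero_smul]
    rcases hφpq.lt_or_gt with hlt | hlt
    · exact ⟨(q, p), ⟨hq, hp⟩, by rwa [← neg_sub, Submodule.neg_mem_iff], hlt⟩
    · exact ⟨(p, q), ⟨hp, hq⟩, hpq, hlt⟩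
  obtain ⟨⟨p₀, q₀⟩, ⟨⟨hp₀, hq₀⟩, hline₀, hlt₀⟩, hmax⟩ :=
    exists_max_image P (fun pq => (pq.1.2 - pq.2.2) / (φ pq.1.1 - φ pq.2.1))
      ((hX.prod hX).subset (sep_subset _ _)) hPne
  refine ⟨(p₀.2 - q₀.2) / (φ p₀.1 - φ q₀.1),
    (one_le_excessAlong_iff hX).2 ⟨p₀, hp₀, q₀, hq₀, ?_, ?_⟩,
    excessAlong_prod_le hφ hX fun p hp q hq hpq hlt => ?_⟩
  · rw [mem_span_singleton_prod_iff hφ]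
    exact ⟨hline₀, by simp [(sub_pos.2 hlt₀).ne']⟩
  · rintro rfl
    exact lt_irrefl _ hlt₀
  · have := hmax (p, q) ⟨⟨hp, hq⟩, hpq, hlt⟩
    rwa [div_le_iff₀ (sub_pos.2 hlt)] at this

end LiftingDirections

lemma exists_eventually_mem_of_forall_exists_le (S : ℕ → Set ℕ) {N : ℕ}
    (hN : (S N).Nonempty) (hS : ∀ n ≥ N, ∀ e ∈ S n, ∃ e' ∈ S (n + 1), e' ≤ e) :
    ∃ k, ∀ᶠ n in atTop, k ∈ S n := by
  classical
  have h : ∃ k n, N ≤ n ∧ k ∈ S n := ⟨hN.some, N, le_rfl, hN.some_mem⟩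
  obtain ⟨n₀, hn₀, hk⟩ := Nat.find_spec h
  refine ⟨Nat.find h, eventually_atTop.2 ⟨n₀, fun n hn => ?_⟩⟩
  induction n, hn using Nat.le_induction with
  | base => exact hk
  | succ n hn ih =>
    obtain ⟨e, he, hle⟩ := hS n (hn₀.trans hn) _ ih
    rwa [le_antisymm hle (Nat.find_min' h ⟨n + 1, by omega, he⟩)] at he

section FinTuples

variable (K : Type*) [Field K]

def initLastEquiv (n : ℕ) : (Fin (n + 1) → K) ≃ₗ[K] (Fin n → K) × K where
  toFun x := (Fin.init x, x (Fin.last n))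
  invFun p := Fin.snoc p.1 p.2
  map_add' _ _ := rfl
  map_smul' _ _ := rfl
  left_inv := Fin.snoc_init_self
  right_inv p := by simp

variable {K} [LinearOrder K] [IsStrictOrderedRing K]

theorem exists_excessAlong_fin_succ_le {n : ℕ} {X : Set (Fin (n + 1) → K)} (hX : X.Finite)
    {v : Fin n → K} (he : 1 ≤ excessAlong K (Fin.init '' X) v) :
    ∃ v', 1 ≤ excessAlong K X v' ∧
      excessAlong K X v' ≤ excessAlong K (Fin.init '' X) v := by
  have hfst : Prod.fst '' (initLastEquiv K n '' X) = Fin.init '' X := by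
    rw [image_image]; rfl
  rw [← hfst] at he ⊢
  obtain ⟨δ, h⟩ := exists_excessAlong_prod_le (hX.image _) he
  refine ⟨(initLastEquiv K n).symm (v, δ), ?_⟩
  rwa [← excessAlong_image_linearEquiv (initLastEquiv K n), LinearEquiv.apply_symm_apply]

theorem exists_eventually_excessAlong_eq {X : ∀ n, Set (Fin n → K)} (hX : ∀ n, (X n).Finite)
    (hinit : ∀ n, Fin.init '' X (n + 1) = X n) {N : ℕ} (hN : 1 < (X N).ncard) :
    ∃ k, ∀ᶠ n in atTop, 1 ≤ k ∧ ∃ v, excessAlong K (X n) v = k := by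
  refine exists_eventually_mem_of_forall_exists_le
    (fun n => {e | 1 ≤ e ∧ ∃ v, excessAlong K (X n) v = e}) (N := N) ?_ ?_
  · obtain ⟨x, hx, y, hy, hxy⟩ := (one_lt_ncard (hX N)).1 hN
    exact ⟨_, (one_le_excessAlong_iff (hX N)).2
      ⟨x, hx, y, hy, Submodule.mem_span_singleton_self _, hxy⟩, _, rfl⟩
  · rintro n - _ ⟨he, v, rfl⟩
    rw [← hinit n] at he ⊢
    obtain ⟨v', h1, h2⟩ := exists_excessAlong_fin_succ_le (hX (n + 1)) he
    exact ⟨_, ⟨h1, v', rfl⟩, h2⟩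

end FinTuples

lemma exists_linearIndependent_nat_of_not_finite {K V : Type*} [DivisionRing K] [AddCommGroup V]
    [Module K V] {M : Submodule K V} (h : ¬ Module.Finite K M) :
    ∃ z : ℕ → V, (∀ i, z i ∈ M) ∧ LinearIndependent K z := by
  let b := Module.Free.chooseBasis K M
  have : Infinite (Module.Free.ChooseBasisIndex K M) :=
    not_finite_iff_infinite.1 fun _ => h (Module.Finite.of_basis b)
  let e := Infinite.natEmbedding (Module.Free.ChooseBasisIndex K M)
  exact ⟨fun i => b (e i), fun i => (b (e i)).2,
    (b.linearIndependent.comp e e.injective).map' M.subtype M.ker_subtype⟩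

section SeqClusterPts

variable {α β : Type*} [TopologicalSpace α] [TopologicalSpace β]

def seqClusterPts (u : ℕ → α) : Set α :=
  {a | ∃ φ : ℕ → ℕ, StrictMono φ ∧ Tendsto (u ∘ φ) atTop (𝓝 a)}

lemma seqClusterPts_comp [FirstCountableTopology α] [T2Space β] {C : Set α} (hC : IsCompact C)
    {u : ℕ → α} (hu : ∀ m, u m ∈ C) {g : α → β} (hg : Continuous g) :
    seqClusterPts (g ∘ u) = g '' seqClusterPts u := by
  refine Subset.antisymm ?_ ?_
  · rintro b ⟨φ, hφ, hb⟩
    obtain ⟨a, -, ψ, hψ, ha⟩ := hC.tendsto_subseq fun m => hu (φ m)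
    exact ⟨a, ⟨φ ∘ ψ, hφ.comp hψ, ha⟩,
      tendsto_nhds_unique ((hg.tendsto a).comp ha) (hb.comp hψ.tendsto_atTop)⟩
  · rintro _ ⟨a, ⟨φ, hφ, ha⟩, rfl⟩
    exact ⟨φ, hφ, (hg.tendsto a).comp ha⟩

end SeqClusterPts

section JointClusterPts

variable (z : ℕ → Linf)

def jointClusterPts (n : ℕ) : Set (Fin n → ℝ) := seqClusterPts fun m (i : Fin n) => z i m

lemma seqClusterPts_comp_eq_image_jointClusterPts {β : Type*} [TopologicalSpace β] [T2Space β]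
    (n : ℕ) {g : (Fin n → ℝ) → β} (hg : Continuous g) :
    seqClusterPts (fun m => g fun i : Fin n => z i m) = g '' jointClusterPts z n := by
  refine seqClusterPts_comp (u := fun m (i : Fin n) => z i m)
    (C := univ.pi fun i : Fin n => Icc (-‖z i‖) ‖z i‖)
    (isCompact_univ_pi fun _ => isCompact_Icc) (fun m i _ => abs_le.1 ?_) hg
  exact (Real.norm_eq_abs _).symm ▸ lp.norm_apply_le_norm ENNReal.top_ne_zero (z i) m

lemma jointClusterPts_finite (hz : ∀ i, (accPtsL (z i)).Finite) (n : ℕ) :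
    (jointClusterPts z n).Finite := by
  refine (Set.Finite.pi fun i : Fin n => hz i).subset fun x hx i _ => ?_
  have : accPtsL (z i) = _ := seqClusterPts_comp_eq_image_jointClusterPts z n (continuous_apply i)
  show x i ∈ accPtsL (z i)
  rw [this]
  exact mem_image_of_mem _ hx

lemma image_init_jointClusterPts (n : ℕ) :
    Fin.init '' jointClusterPts z (n + 1) = jointClusterPts z n :=
  (seqClusterPts_comp_eq_image_jointClusterPts z (n + 1)
    (continuous_pi fun _ => continuous_apply _)).symm

lemma accPtsL_sum_smul {n : ℕ} (f : Dual ℝ (Fin n → ℝ)) :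
    accPtsL (∑ i : Fin n, f (Pi.single i 1) • z i) = f '' jointClusterPts z n := by
  rw [← seqClusterPts_comp_eq_image_jointClusterPts z n
    (LinearMap.continuous_of_finiteDimensional f)]
  show seqClusterPts (fun m => (∑ i : Fin n, f (Pi.single i 1) • z i : Linf) m) = _
  congr 1
  funext m
  rw [lp.coeFn_sum, Finset.sum_apply]
  conv_rhs => rw [← Finset.univ_sum_single (fun i : Fin n => z i m)]
  refine (map_sum f _ _).symm ▸ Finset.sum_congr rfl fun i _ => ?_
  rw [lp.coeFn_smul, Pi.smul_apply, smul_eq_mul, mul_comm, ← smul_eq_mul, ← map_smul,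
    ← Pi.single_smul', smul_eq_mul, mul_one]

lemma ncard_image_jointClusterPts_mem {A : Set ℕ} {M : Submodule ℝ Linf}
    (hM : ∀ w ∈ M, w ≠ 0 → (accPtsL w).ncard ∈ A) (hzM : ∀ i, z i ∈ M)
    (hz : LinearIndependent ℝ z) {n : ℕ} {f : Dual ℝ (Fin n → ℝ)} (hf : f ≠ 0) :
    (f '' jointClusterPts z n).ncard ∈ A := by
  rw [← accPtsL_sum_smul]
  refine hM _ (sum_mem fun i _ => M.smul_mem _ (hzM i)) fun h => hf ?_
  have := Fintype.linearIndependent_iff.1 (hz.comp _ Fin.val_injective) _ h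
  exact (Pi.basisFun ℝ (Fin n)).ext fun i => by simpa using this i

end JointClusterPts

theorem lineable_implies_shift_infinite (A : Set ℕ) (hA : A ⊆ {n | 2 ≤ n})
    (M : Submodule ℝ Linf) (hinf : ¬ Module.Finite ℝ M)
    (hM : ∀ z ∈ M, z ≠ 0 → (accPtsL z).Finite ∧ (accPtsL z).ncard ∈ A) :
    ∃ k : ℕ, 1 ≤ k ∧ {a ∈ A | a + k ∈ A}.Infinite := by
  obtain ⟨z, hzM, hz⟩ := exists_linearIndependent_nat_of_not_finite hinf
  set X := jointClusterPts z
  have hfin : ∀ n, (X n).Finite :=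
    jointClusterPts_finite z fun i => (hM _ (hzM i) (hz.ne_zero i)).1
  have hcount : ∀ n, ∀ f : Dual ℝ (Fin n → ℝ), f ≠ 0 → (f '' X n).ncard ∈ A :=
    fun n f hf => ncard_image_jointClusterPts_mem z (fun w hw hw0 => (hM w hw hw0).2) hzM hz hf
  have hlarge : ∀ n, n ≤ (X n).ncard := fun n => by
    simpa using finrank_le_ncard_of_forall_dual (hfin n) fun f hf => hA (hcount n f hf)
  obtain ⟨k, hk⟩ :=
    exists_eventually_excessAlong_eq hfin (image_init_jointClusterPts z) (hlarge 2)
  obtain ⟨N, hN⟩ := eventually_atTop.1 (hk.and (eventually_ge_atTop 2))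
  refine ⟨k, (hN N le_rfl).1.1, infinite_of_forall_exists_gt fun B => ?_⟩
  set n := N + B + k + 1
  obtain ⟨⟨-, v, hv⟩, hn⟩ := hN n (by omega)
  have hrank : 2 ≤ finrank ℝ (Fin n → ℝ) := by simpa using hn
  have := Module.nontrivial_of_finrank_pos (R := ℝ) (M := Fin n → ℝ) (by omega)
  refine ⟨(X n).ncard - k, ⟨?_, ?_⟩, by have := hlarge n; omega⟩
  · exact hv ▸ ncard_sub_excessAlong_mem_of_forall_dual (hfin n) (hcount n) hrank v
  · rw [Nat.sub_add_cancel (hv ▸ Nat.sub_le _ _)]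
    exact ncard_mem_of_forall_dual (K := ℝ) (hfin n) (hcount n)
end
end

section
/- Let x_1, …, x_k ∈ ℓ∞ each have finitely many accumulation points, with |L_{x_i}| = n_i ≥ 1, and let z = Σ_{i=1}^k a_i x_i with a_k ≠ 0. Then n_k / (n_1⋯n_{k−1}) ≤ |L_z| ≤ n_1⋯n_k. -/
open Filter Topology Set ENNReal

noncomputable section

lemma accPts_sum_subset {ι : Type*} [Fintype ι] (y : ι → ℕ → ℝ)
    (hb : ∀ j, ∃ C, ∀ m, |y j m| ≤ C) (c : ι → ℝ) :
    accPts (fun m => ∑ j, c j * y j m) ⊆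
      (fun l : ι → ℝ => ∑ j, c j * l j) '' (univ.pi fun j => accPts (y j)) := by
  intro b hb'
  obtain ⟨φ, hφ, hlim⟩ := hb'
  choose C hC using hb
  have hscomp : IsCompact (univ.pi fun j => Icc (-(C j)) (C j)) :=
    isCompact_univ_pi fun j => isCompact_Icc
  have hsb : Bornology.IsBounded (univ.pi fun j => Icc (-(C j)) (C j)) :=
    hscomp.isBounded
  have hmem : ∀ m, (fun j => y j (φ m)) ∈ univ.pi fun j => Icc (-(C j)) (C j) := by
    intro m j _
    exact abs_le.mp (hC j (φ m))
  obtain ⟨L, -, ψ, hψ, hLlim⟩ := tendsto_subseq_of_bounded hsb hmem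
  have hcoord : ∀ j, Tendsto (fun m => y j (φ (ψ m))) atTop (𝓝 (L j)) := by
    intro j
    exact (tendsto_pi_nhds.mp hLlim j)
  refine ⟨L, fun j _ => ⟨φ ∘ ψ, hφ.comp hψ, hcoord j⟩, ?_⟩
  have h1 : Tendsto (fun m => ∑ j, c j * y j (φ (ψ m))) atTop (𝓝 (∑ j, c j * L j)) :=
    tendsto_finset_sum _ fun j _ => (hcoord j).const_mul _
  have h2 : Tendsto (fun m => ∑ j, c j * y j (φ (ψ m))) atTop (𝓝 b) :=
    hlim.comp hψ.tendsto_atTop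
  exact tendsto_nhds_unique h1 h2

lemma ncard_univ_pi {ι : Type*} [Fintype ι] (t : ι → Set ℝ) :
    (univ.pi t).ncard = ∏ j, (t j).ncard := by
  rw [← Nat.card_coe_set_eq, Nat.card_congr (Equiv.Set.univPi t), Nat.card_pi]
  simp only [Nat.card_coe_set_eq]

theorem card_accPts_sum_estimate (k : ℕ) (x : Fin (k + 1) → ℕ → ℝ)
    (hx : ∀ i, ∃ C, ∀ m, |x i m| ≤ C)
    (n : Fin (k + 1) → ℕ) (hn : ∀ i, 1 ≤ n i)
    (hfin : ∀ i, (accPts (x i)).Finite) (hcard : ∀ i, (accPts (x i)).ncard = n i)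
    (a : Fin (k + 1) → ℝ) (hak : a (Fin.last k) ≠ 0)
    (z : ℕ → ℝ) (hz : z = fun m => ∑ i, a i * x i m) :
    (accPts z).Finite ∧
    n (Fin.last k) ≤ (accPts z).ncard * ∏ i : Fin k, n i.castSucc ∧
    (accPts z).ncard ≤ ∏ i : Fin (k + 1), n i := by
  subst hz
  -- upper bound / finiteness
  have hsub := accPts_sum_subset x hx a
  have hfinpi : (univ.pi fun i => accPts (x i)).Finite := Set.Finite.pi hfin
  have hfinz : (accPts fun m => ∑ i, a i * x i m).Finite :=
    (hfinpi.image _).subset hsub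
  have hupper : (accPts fun m => ∑ i, a i * x i m).ncard ≤ ∏ i : Fin (k + 1), n i := by
    calc (accPts fun m => ∑ i, a i * x i m).ncard
        ≤ ((fun l : Fin (k+1) → ℝ => ∑ j, a j * l j) ''
            (univ.pi fun j => accPts (x j))).ncard :=
          Set.ncard_le_ncard hsub (hfinpi.image _)
      _ ≤ (univ.pi fun j => accPts (x j)).ncard := Set.ncard_image_le hfinpi
      _ = ∏ i : Fin (k + 1), n i := by
          rw [ncard_univ_pi]; exact Finset.prod_congr rfl fun i _ => hcard i
  refine ⟨hfinz, ?_, hupper⟩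
  -- lower bound
  set z : ℕ → ℝ := fun m => ∑ i, a i * x i m with hzdef
  set y : Fin (k + 1) → ℕ → ℝ := Fin.snoc (fun i : Fin k => x i.castSucc) z with hy
  set c : Fin (k + 1) → ℝ :=
    Fin.snoc (fun i : Fin k => -(a i.castSucc) / a (Fin.last k)) (1 / a (Fin.last k)) with hc
  have hyb : ∀ j, ∃ C, ∀ m, |y j m| ≤ C := by
    intro j
    induction j using Fin.lastCases with
    | last =>
      choose C hC using hx
      refine ⟨∑ i, |a i| * C i, fun m => ?_⟩
      simp only [hy, Fin.snoc_last, hzdef]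
      calc |∑ i, a i * x i m| ≤ ∑ i, |a i * x i m| := Finset.abs_sum_le_sum_abs _ _
        _ ≤ ∑ i, |a i| * C i := by
            refine Finset.sum_le_sum fun i _ => ?_
            rw [abs_mul]
            exact mul_le_mul_of_nonneg_left (hC i m) (abs_nonneg _)
    | cast i =>
      obtain ⟨C, hC⟩ := hx i.castSucc
      exact ⟨C, fun m => by simpa [hy] using hC m⟩
  have hxlast : x (Fin.last k) = fun m => ∑ j, c j * y j m := by
    funext m
    have hzsum : z m = (∑ i : Fin k, a i.castSucc * x i.castSucc m) +
        a (Fin.last k) * x (Fin.last k) m := by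
      rw [hzdef]; exact Fin.sum_univ_castSucc _
    rw [Fin.sum_univ_castSucc (f := fun j => c j * y j m)]
    simp only [hy, hc, Fin.snoc_last, Fin.snoc_castSucc]
    rw [hzsum]
    have hterm : ∀ i : Fin k, -a i.castSucc / a (Fin.last k) * x i.castSucc m =
        -(a i.castSucc * x i.castSucc m) / a (Fin.last k) := fun i => by ring
    rw [Finset.sum_congr rfl (fun i _ => hterm i), ← Finset.sum_div,
      Finset.sum_neg_distrib]
    field_simp
    ring
  have hsub2 : accPts (x (Fin.last k)) ⊆
      (fun l : Fin (k+1) → ℝ => ∑ j, c j * l j) '' (univ.pi fun j => accPts (y j)) := by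
    rw [hxlast]
    exact accPts_sum_subset y hyb c
  have hfiny : ∀ j, (accPts (y j)).Finite := by
    intro j
    induction j using Fin.lastCases with
    | last => simpa [hy] using hfinz
    | cast i => simpa [hy] using hfin i.castSucc
  have hfinpi2 : (univ.pi fun j => accPts (y j)).Finite := Set.Finite.pi hfiny
  calc n (Fin.last k) = (accPts (x (Fin.last k))).ncard := (hcard _).symm
    _ ≤ ((fun l : Fin (k+1) → ℝ => ∑ j, c j * l j) ''
          (univ.pi fun j => accPts (y j))).ncard :=
        Set.ncard_le_ncard hsub2 (hfinpi2.image _)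
    _ ≤ (univ.pi fun j => accPts (y j)).ncard := Set.ncard_image_le hfinpi2
    _ = (accPts z).ncard * ∏ i : Fin k, n i.castSucc := by
        rw [ncard_univ_pi, Fin.prod_univ_castSucc, mul_comm]
        congr 1
        · simp [hy]
        · exact Finset.prod_congr rfl fun i _ => by rw [hy]; simp [hcard i.castSucc]
end
end

section
/- For every strictly increasing sequence (n_k)_{k≥1} of positive integers, there exists an infinite set K ⊆ ℕ such that the set L([2,∞) \ ∪_{k∈K} [n_k, n_{k+1})) is lineable, i.e., L(A) ∪ {0} contains an infinite-dimensional subspace of ℓ∞ where A = {m ≥ 2 : m ∉ [n_k, n_{k+1}) for all k ∈ K}. -/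
open Filter Topology Set ENNReal

noncomputable section

/-! ### Auxiliary lemmas -/

lemma accPts_eq_range (x : ℕ → ℝ) (hfin : (Set.range x).Finite)
    (hinf : ∀ t : ℕ, {s : ℕ | x s = x t}.Infinite) : accPts x = Set.range x := by
  apply Set.Subset.antisymm
  · rintro a ⟨φ, hφ, ha⟩
    have h1 : ∀ k, x (φ k) ∈ Set.range x := fun k => Set.mem_range_self _
    have h2 := mem_closure_of_tendsto ha (Filter.Eventually.of_forall h1)
    rwa [hfin.isClosed.closure_eq] at h2
  · rintro _ ⟨t, rfl⟩
    refine ⟨Nat.nth (fun s => x s = x t), Nat.nth_strictMono (hinf t), ?_⟩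
    have h3 : ∀ k, x (Nat.nth (fun s => x s = x t) k) = x t := fun k =>
      Nat.nth_mem_of_infinite (hinf t) k
    simpa [h3] using tendsto_const_nhds

/-- Recursive cut points. -/
def Scut (n : ℕ → ℕ) : ℕ → ℕ
  | 0 => 2
  | j+1 => Scut n j + (n (Scut n j + 1) - 1)

/-- Number of nonzero block values in row `j`. -/
def mu (n : ℕ → ℕ) : ℕ → ℕ
  | 0 => 1
  | j+1 => n (Scut n j + 1) - 1

section NumLemmas
variable (n : ℕ → ℕ)

lemma n_ge (hn : StrictMono n) (hpos : ∀ k, 0 < n k) (k : ℕ) : k + 1 ≤ n k := by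
  induction k with
  | zero => exact hpos 0
  | succ k ih => exact Nat.succ_le_of_lt (lt_of_le_of_lt ih (hn (Nat.lt_succ_self k)))

lemma mu_pos (hn : StrictMono n) (hpos : ∀ k, 0 < n k) (j : ℕ) : 1 ≤ mu n j := by
  cases j with
  | zero => simp [mu]
  | succ j =>
    have := n_ge n hn hpos (Scut n j + 1)
    simp only [mu]
    omega

lemma Scut_succ (j : ℕ) : Scut n (j+1) = Scut n j + mu n (j+1) := rfl

lemma Scut_strictMono (hn : StrictMono n) (hpos : ∀ k, 0 < n k) : StrictMono (Scut n) := by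
  apply strictMono_nat_of_lt_succ
  intro j
  have := mu_pos n hn hpos (j+1)
  rw [Scut_succ]; omega

lemma Scut_eq_sum (J : ℕ) : Scut n J = 1 + ∑ i ∈ Finset.range (J+1), mu n i := by
  induction J with
  | zero => simp [Scut, mu]
  | succ J ih => rw [Finset.sum_range_succ, Scut_succ, ih]; ring

lemma mu_succ_eq (hn : StrictMono n) (hpos : ∀ k, 0 < n k) (J : ℕ) :
    1 + mu n (J+1) = n (Scut n J + 1) := by
  have := n_ge n hn hpos (Scut n J + 1)
  simp only [mu]; omega

end NumLemmas

/-- Block indexing: each fiber is infinite, surjective onto `ℕ × ℕ`. -/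
def gblk (t : ℕ) : ℕ × ℕ := (t.unpair.1).unpair

lemma gblk_surj : Function.Surjective gblk := fun p =>
  ⟨Nat.pair (Nat.pair p.1 p.2) 0, by simp [gblk]⟩

lemma gblk_fiber_infinite (t : ℕ) : {s : ℕ | gblk s = gblk t}.Infinite := by
  apply Set.infinite_of_injective_forall_mem (f := fun k => Nat.pair t.unpair.1 k)
  · intro a b hab
    have := congrArg (fun x => x.unpair.2) hab
    simpa using this
  · intro k
    simp [gblk]

/-- The basic sequences. -/
def eseq (μ : ℕ → ℕ) (j : ℕ) : ℕ → ℝ :=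
  fun t => if (gblk t).1 = j ∧ (gblk t).2 ≤ μ j then ((gblk t).2 : ℝ) else 0

lemma eseq_mem (μ : ℕ → ℕ) (j : ℕ) : Memℓp (eseq μ j) ∞ := by
  apply memℓp_infty
  refine ⟨(μ j : ℝ), ?_⟩
  rintro x ⟨t, rfl⟩
  simp only [eseq]
  split
  · next h =>
    rw [Real.norm_eq_abs, abs_of_nonneg (by positivity)]
    exact_mod_cast h.2
  · simp [Nat.cast_nonneg]

/-- The basic vectors in `ℓ∞`. -/
def Evec (μ : ℕ → ℕ) (j : ℕ) : Linf := ⟨eseq μ j, eseq_mem μ j⟩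

/-- Coercion of `ℓ∞` to functions, as a linear map. -/
def coeLM : Linf →ₗ[ℝ] (ℕ → ℝ) where
  toFun z := fun t => z t
  map_add' f g := by ext t; exact lp.coeFn_add f g ▸ rfl
  map_smul' c f := by ext t; exact lp.coeFn_smul c f ▸ rfl

lemma eseq_indep (μ : ℕ → ℕ) (hμ : ∀ j, 1 ≤ μ j) : LinearIndependent ℝ (eseq μ) := by
  rw [linearIndependent_iff']
  intro s gcoef h i hi
  have := congrFun h (Nat.pair (Nat.pair i 1) 0)
  simp only [Finset.sum_apply, Pi.smul_apply, Pi.zero_apply, smul_eq_mul, eseq, gblk,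
    Nat.unpair_pair] at this
  rw [Finset.sum_eq_single i] at this
  · simp [hμ i] at this
    exact this
  · intro b _ hb
    simp [Ne.symm hb]
  · intro h'; exact absurd hi h'

lemma Evec_indep (μ : ℕ → ℕ) (hμ : ∀ j, 1 ≤ μ j) : LinearIndependent ℝ (Evec μ) := by
  exact LinearIndependent.of_comp coeLM (eseq_indep μ hμ)

lemma span_not_finite (μ : ℕ → ℕ) (hμ : ∀ j, 1 ≤ μ j)
    (hfin : Module.Finite ℝ (Submodule.span ℝ (Set.range (Evec μ)))) : False := by
  set M := Submodule.span ℝ (Set.range (Evec μ))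
  have hv : ∀ j, Evec μ j ∈ M := fun j => Submodule.subset_span (Set.mem_range_self j)
  have hli : LinearIndependent ℝ (fun j : ℕ => (⟨Evec μ j, hv j⟩ : M)) := by
    apply LinearIndependent.of_comp M.subtype
    exact Evec_indep μ hμ
  haveI := hfin
  exact Module.Finite.not_linearIndependent_of_infinite _ hli

theorem exists_infinite_K_lineable (n : ℕ → ℕ) (hn : StrictMono n) (hpos : ∀ k, 0 < n k) :
    ∃ K : Set ℕ, K.Infinite ∧
      ∃ M : Submodule ℝ Linf, ¬ Module.Finite ℝ M ∧
        ∀ z ∈ M, z ≠ 0 → (accPtsL z).Finite ∧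
          (2 ≤ (accPtsL z).ncard ∧
            ∀ k ∈ K, ¬ (n k ≤ (accPtsL z).ncard ∧ (accPtsL z).ncard < n (k + 1))) := by
  classical
  set μ : ℕ → ℕ := mu n with hμdef
  have hμ : ∀ j, 1 ≤ μ j := mu_pos n hn hpos
  refine ⟨Set.range (Scut n),
    Set.infinite_range_of_injective (Scut_strictMono n hn hpos).injective,
    Submodule.span ℝ (Set.range (Evec μ)), span_not_finite μ hμ, ?_⟩
  intro z hz hz0
  rw [Finsupp.mem_span_range_iff_exists_finsupp] at hz
  obtain ⟨c, hc⟩ := hz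
  set F : Finset ℕ := c.support with hFdef
  have hFne : F.Nonempty := by
    rcases Finset.eq_empty_or_nonempty F with h | h
    · exfalso; apply hz0
      rw [← hc]
      have : c = 0 := Finsupp.support_eq_empty.mp h
      simp [this]
    · exact h
  obtain ⟨J, hJmem, hJmax⟩ : ∃ J ∈ F, ∀ j ∈ F, j ≤ J :=
    ⟨F.max' hFne, F.max'_mem hFne, fun j hj => F.le_max' j hj⟩
  have hcJ : c J ≠ 0 := Finsupp.mem_support_iff.mp hJmem
  -- the value function
  set val : ℕ × ℕ → ℝ :=
    fun p => if p.1 ∈ F ∧ 1 ≤ p.2 ∧ p.2 ≤ μ p.1 then c p.1 * (p.2 : ℝ) else 0 with hvaldef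
  -- pointwise formula for z
  have hzsum : (fun t => z t) = fun t => ∑ i ∈ F, c i * eseq μ i t := by
    have h1 : coeLM z = ∑ i ∈ F, c i • eseq μ i := by
      rw [← hc, map_finsuppSum]
      rw [Finsupp.sum]
      refine Finset.sum_congr rfl fun i _ => ?_
      rw [map_smul]
      rfl
    funext t
    have := congrFun h1 t
    simpa [coeLM] using this
  have hval : ∀ t : ℕ, z t = val (gblk t) := by
    intro t
    rw [congrFun hzsum t]
    simp only [hvaldef, eseq]
    obtain ⟨j, r⟩ := gblk t
    simp only
    by_cases hj : j ∈ F
    · rw [Finset.sum_eq_single_of_mem j hj (fun b _ hbj => by simp [Ne.symm hbj])]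
      by_cases hr : r ≤ μ j
      · by_cases hr1 : 1 ≤ r
        · simp [hr, hr1, hj]
        · have h0 : r = 0 := by omega
          simp [h0]
      · simp [hr]
    · rw [Finset.sum_eq_zero (fun b hb => ?_)]
      · simp [hj]
      · have : j ≠ b := fun h => hj (h ▸ hb)
        simp [this]
  set W : Finset ℝ := F.biUnion (fun j => (Finset.Icc 1 (μ j)).image (fun r : ℕ => c j * (r : ℝ)))
    with hWdef
  have h0W : (0:ℝ) ∉ W := by
    simp only [hWdef, Finset.mem_biUnion, Finset.mem_image, Finset.mem_Icc]
    rintro ⟨j, hjF, r, ⟨hr1, _⟩, hr0⟩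
    have hcj : c j ≠ 0 := Finsupp.mem_support_iff.mp hjF
    have hrne : (r:ℝ) ≠ 0 := Nat.cast_ne_zero.mpr (by omega)
    exact (mul_ne_zero hcj hrne) hr0
  have hrange : Set.range (fun t => z t) = insert (0:ℝ) (W : Set ℝ) := by
    have h1 : Set.range (fun t => z t) = Set.range val := by
      have h2 : (fun t => z t) = val ∘ gblk := funext hval
      rw [h2, Set.range_comp, gblk_surj.range_eq, Set.image_univ]
    rw [h1]
    have hvval : ∀ (j r : ℕ),
        val (j, r) = if j ∈ F ∧ 1 ≤ r ∧ r ≤ μ j then c j * (r:ℝ) else 0 := fun _ _ => rfl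
    apply Set.Subset.antisymm
    · rintro x ⟨⟨j, r⟩, rfl⟩
      by_cases h : j ∈ F ∧ 1 ≤ r ∧ r ≤ μ j
      · apply Set.mem_insert_iff.mpr
        right
        rw [hvval, if_pos h]
        exact Finset.mem_coe.mpr (Finset.mem_biUnion.mpr
          ⟨j, h.1, Finset.mem_image.mpr ⟨r, Finset.mem_Icc.mpr ⟨h.2.1, h.2.2⟩, rfl⟩⟩)
      · apply Set.mem_insert_iff.mpr
        left
        rw [hvval, if_neg h]
    · intro x hx
      rcases Set.mem_insert_iff.mp hx with rfl | hx
      · exact ⟨(0, 0), by rw [hvval]; simp⟩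
      · obtain ⟨j, hj, hx2⟩ := Finset.mem_biUnion.mp (Finset.mem_coe.mp hx)
        obtain ⟨r, hr, rfl⟩ := Finset.mem_image.mp hx2
        rw [Finset.mem_Icc] at hr
        exact ⟨(j, r), by rw [hvval, if_pos ⟨hj, hr.1, hr.2⟩]⟩
  have haccs : accPtsL z = insert (0:ℝ) (W : Set ℝ) := by
    rw [accPtsL, accPts_eq_range _ ?_ ?_]
    · exact hrange
    · rw [hrange]; exact (W.finite_toSet.insert 0)
    · intro t
      apply (gblk_fiber_infinite t).mono
      intro s hs
      simp only [Set.mem_setOf_eq] at hs ⊢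
      rw [hval s, hval t, hs]
  have hfinW : (accPtsL z).Finite := by
    rw [haccs]; exact (W.finite_toSet.insert 0)
  have hncard : (accPtsL z).ncard = W.card + 1 := by
    rw [haccs, Set.ncard_insert_of_notMem (by exact_mod_cast h0W) W.finite_toSet,
      Set.ncard_coe_finset]
  have hlow : μ J ≤ W.card := by
    have hsub : (Finset.Icc 1 (μ J)).image (fun r : ℕ => c J * (r:ℝ)) ⊆ W := by
      rw [hWdef]
      exact Finset.subset_biUnion_of_mem (fun j => (Finset.Icc 1 (μ j)).image (fun r : ℕ => c j * (r:ℝ))) hJmem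
    have hinj : Function.Injective (fun r : ℕ => c J * (r:ℝ)) := by
      intro a b hab
      have := mul_left_cancel₀ hcJ hab
      exact_mod_cast this
    calc μ J = (Finset.Icc 1 (μ J)).card := by rw [Nat.card_Icc]; omega
    _ = ((Finset.Icc 1 (μ J)).image (fun r : ℕ => c J * (r:ℝ))).card :=
      (Finset.card_image_of_injective _ hinj).symm
    _ ≤ W.card := Finset.card_le_card hsub
  have hhigh : W.card + 1 ≤ Scut n J := by
    have h1 : W.card ≤ ∑ j ∈ F, ((Finset.Icc 1 (μ j)).image (fun r : ℕ => c j * (r:ℝ))).card :=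
      hWdef ▸ Finset.card_biUnion_le
    have h2 : ∀ j ∈ F, ((Finset.Icc 1 (μ j)).image (fun r : ℕ => c j * (r:ℝ))).card ≤ μ j := by
      intro j _
      refine le_trans Finset.card_image_le ?_
      rw [Nat.card_Icc]; omega
    have h3 : ∑ j ∈ F, μ j ≤ ∑ j ∈ Finset.range (J+1), μ j := by
      apply Finset.sum_le_sum_of_subset
      intro j hj
      rw [Finset.mem_range]
      exact Nat.lt_succ_of_le (hJmax j hj)
    have h4 := Scut_eq_sum n J
    rw [← hμdef] at h4
    have h5 := Finset.sum_le_sum h2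
    omega
  refine ⟨hfinW, ?_, ?_⟩
  · rw [hncard]
    have := hμ J
    omega
  · rintro k ⟨i, rfl⟩ ⟨h1, h2⟩
    rw [hncard] at h1 h2
    rcases le_or_gt J i with hJi | hiJ
    · have hmono := (Scut_strictMono n hn hpos).monotone hJi
      have := n_ge n hn hpos (Scut n i)
      omega
    · obtain ⟨J', rfl⟩ : ∃ J', J = J' + 1 := ⟨J - 1, by omega⟩
      have hmu := mu_succ_eq n hn hpos J'
      rw [← hμdef] at hmu
      have hm : n (Scut n i + 1) ≤ n (Scut n J' + 1) := by
        apply hn.monotone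
        have := (Scut_strictMono n hn hpos).monotone (by omega : i ≤ J')
        omega
      omega
end
end

section
/- There exists a strictly increasing integer sequence (a_n)_{n≥0} with a_0 ≥ 2 and limsup_n (a_{n+1} − a_n) = ∞ such that L({a_n : n ≥ 0}) ∪ {0} contains an infinite-dimensional linear subspace of ℓ∞. -/
open Filter Topology Set ENNReal

noncomputable section

/-!
The vector `cyclicVec i` runs periodically through `1, …, 4 ^ i` along the `i`-th column of
`ℕ ≃ ℕ × ℕ` and vanishes elsewhere. A nonzero combination `z = ∑ c i • cyclicVec i` with
top index `k` has finitely many values, each taken infinitely often, so its accumulation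
points are exactly its values: `0`, the `4 ^ k` distinct numbers `c k * (j + 1)`, and at
most `∑ i < k, 4 ^ i` others. Their number therefore lies in the block
`(4 ^ k, 2 * 4 ^ k + 1]`, and enumerating the union of these blocks gives a sequence whose
gaps `4 ^ (k + 1) - 2 * 4 ^ k - 1` are unbounded.
-/

open Finsupp (linearCombination linearCombination_apply)

lemma accPts_subset_range {x : ℕ → ℝ} (hx : (range x).Finite) : accPts x ⊆ range x :=
  fun _ ⟨_, _, hlim⟩ => hx.isClosed.mem_of_tendsto hlim (.of_forall fun _ => mem_range_self _)

lemma mem_accPts_of_infinite_preimage {x : ℕ → ℝ} {a : ℝ} (ha : (x ⁻¹' {a}).Infinite) :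
    a ∈ accPts x :=
  ⟨Nat.nth (· ∈ x ⁻¹' {a}), Nat.nth_strictMono ha,
    tendsto_const_nhds.congr fun k => (Nat.nth_mem_of_infinite ha k).symm⟩

lemma accPts_eq_range_s11 {x : ℕ → ℝ} (hx : (range x).Finite)
    (hrec : ∀ n, (x ⁻¹' {x n}).Infinite) : accPts x = range x :=
  (accPts_subset_range hx).antisymm <| range_subset_iff.2 fun n =>
    mem_accPts_of_infinite_preimage (hrec n)

lemma Nat.exists_le_nth_succ_sub_nth {p : ℕ → Prop} [DecidablePred p] (hp : {n | p n}.Infinite)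
    {x C : ℕ} (hx : p x) (hgap : ∀ y, p y → x < y → x + C ≤ y) :
    ∃ m, C ≤ Nat.nth p (m + 1) - Nat.nth p m := by
  refine ⟨Nat.count p x, ?_⟩
  have hlt : Nat.nth p (Nat.count p x) < Nat.nth p (Nat.count p x + 1) :=
    Nat.nth_strictMono hp (Nat.lt_add_one _)
  rw [Nat.nth_count hx] at hlt ⊢
  have := hgap (Nat.nth p (Nat.count p x + 1)) (Nat.nth_mem_of_infinite hp _) hlt
  omega

def blocks : Set ℕ := {m | ∃ k, 4 ^ k < m ∧ m ≤ 2 * 4 ^ k + 1}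

lemma two_mul_four_pow_add_one_mem_blocks (k : ℕ) : 2 * 4 ^ k + 1 ∈ blocks :=
  ⟨k, by omega, le_rfl⟩

lemma blocks_infinite : blocks.Infinite :=
  infinite_of_injective_forall_mem (f := fun k => 2 * 4 ^ k + 1)
    (fun _ _ h => Nat.pow_right_injective le_rfl (by simpa using h))
    two_mul_four_pow_add_one_mem_blocks

lemma two_le_of_mem_blocks {m : ℕ} (hm : m ∈ blocks) : 2 ≤ m := by
  obtain ⟨k, hk, -⟩ := hm
  have := Nat.one_le_pow k 4 (by norm_num)
  omega

lemma four_pow_succ_lt_of_mem_blocks {k m : ℕ} (hm : m ∈ blocks) (hkm : 2 * 4 ^ k + 1 < m) :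
    4 ^ (k + 1) < m := by
  obtain ⟨l, hlm, hml⟩ := hm
  have : k < l := by
    by_contra! hlk
    have := Nat.pow_le_pow_right (show 0 < 4 by norm_num) hlk
    omega
  exact (Nat.pow_le_pow_right (by norm_num) this).trans_lt hlm

lemma geom_sum_four_le (k : ℕ) : ∑ i ∈ Finset.range (k + 1), 4 ^ i ≤ 2 * 4 ^ k := by
  rw [Nat.geomSum_eq (by norm_num : 2 ≤ 4), pow_succ]
  omega

def cyclicSeq (i : ℕ) (n : ℕ) : ℝ :=
  if n.unpair.1 = i then (n.unpair.2 % 4 ^ i + 1 : ℕ) else 0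

lemma memℓp_cyclicSeq (i : ℕ) : Memℓp (cyclicSeq i) ∞ := by
  refine memℓp_infty ⟨4 ^ i, ?_⟩
  rintro _ ⟨n, rfl⟩
  dsimp only [cyclicSeq]
  split_ifs
  · rw [Real.norm_natCast]
    exact_mod_cast Nat.mod_lt _ (by positivity)
  · simp

def cyclicVec (i : ℕ) : Linf := ⟨cyclicSeq i, memℓp_cyclicSeq i⟩

lemma linearCombination_cyclicVec_apply (c : ℕ →₀ ℝ) (n : ℕ) :
    linearCombination ℝ cyclicVec c n =
      c n.unpair.1 * (n.unpair.2 % 4 ^ n.unpair.1 + 1 : ℕ) := by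
  rw [linearCombination_apply, Finsupp.sum, lp.coeFn_sum, Finset.sum_apply]
  simp only [lp.coeFn_smul, Pi.smul_apply, smul_eq_mul]
  rw [Finset.sum_eq_single n.unpair.1]
  · simp [cyclicVec, cyclicSeq]
  · intro i _ hi
    simp [cyclicVec, cyclicSeq, Ne.symm hi]
  · intro hn
    rw [Finsupp.notMem_support_iff.1 hn, zero_mul]

lemma linearCombination_cyclicVec_apply_pair (c : ℕ →₀ ℝ) (i j : ℕ) :
    linearCombination ℝ cyclicVec c (Nat.pair i j) = c i * (j % 4 ^ i + 1 : ℕ) := by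
  rw [linearCombination_cyclicVec_apply, Nat.unpair_pair]

lemma infinite_preimage_linearCombination_cyclicVec (c : ℕ →₀ ℝ) (n : ℕ) :
    (⇑(linearCombination ℝ cyclicVec c) ⁻¹'
      {linearCombination ℝ cyclicVec c n}).Infinite := by
  obtain ⟨i, j, rfl⟩ : ∃ i j, Nat.pair i j = n := ⟨_, _, Nat.pair_unpair n⟩
  refine infinite_of_injective_forall_mem (f := fun m => Nat.pair i (j + m * 4 ^ i))
    (fun a b h => ?_) (fun m => ?_)
  · have := (Nat.pair_eq_pair.1 h).2
    exact Nat.eq_of_mul_eq_mul_right (by positivity) (Nat.add_left_cancel this)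
  · simp [linearCombination_cyclicVec_apply_pair, Nat.add_mul_mod_self_right]

def columnValues (c : ℕ →₀ ℝ) (i : ℕ) : Finset ℝ :=
  (Finset.range (4 ^ i)).image fun j : ℕ => c i * (j + 1 : ℕ)

lemma card_columnValues_le (c : ℕ →₀ ℝ) (i : ℕ) : (columnValues c i).card ≤ 4 ^ i :=
  Finset.card_image_le.trans (Finset.card_range _).le

lemma card_columnValues {c : ℕ →₀ ℝ} {i : ℕ} (hi : c i ≠ 0) :
    (columnValues c i).card = 4 ^ i := by
  rw [columnValues, Finset.card_image_of_injective _ fun a b h => by simpa [hi] using h,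
    Finset.card_range]

lemma zero_notMem_columnValues {c : ℕ →₀ ℝ} {i : ℕ} (hi : c i ≠ 0) :
    0 ∉ columnValues c i := by
  simp [columnValues, hi, Nat.cast_add_one_ne_zero]

section
variable (c : ℕ →₀ ℝ)

lemma range_linearCombination_cyclicVec_subset {k : ℕ} (hk : ∀ i ∈ c.support, i ≤ k) :
    range (linearCombination ℝ cyclicVec c) ⊆
      ↑(insert 0 ((Finset.range (k + 1)).biUnion (columnValues c))) := by
  rintro _ ⟨n, rfl⟩
  obtain ⟨i, j, rfl⟩ : ∃ i j, Nat.pair i j = n := ⟨_, _, Nat.pair_unpair n⟩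
  rw [linearCombination_cyclicVec_apply_pair]
  by_cases hi : i ∈ c.support
  · refine Finset.mem_insert_of_mem (Finset.mem_biUnion.2 ⟨i, ?_, ?_⟩)
    · exact Finset.mem_range.2 (Nat.lt_succ_of_le (hk i hi))
    · exact Finset.mem_image.2
        ⟨j % 4 ^ i, Finset.mem_range.2 (Nat.mod_lt _ (by positivity)), rfl⟩
  · simp [Finsupp.notMem_support_iff.1 hi]

lemma columnValues_subset_range (i : ℕ) :
    ↑(columnValues c i) ⊆ range (linearCombination ℝ cyclicVec c) := by
  intro _ hv
  obtain ⟨j, hj, rfl⟩ := Finset.mem_image.1 hv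
  refine ⟨Nat.pair i j, ?_⟩
  rw [linearCombination_cyclicVec_apply_pair, Nat.mod_eq_of_lt (Finset.mem_range.1 hj)]

lemma zero_mem_range_linearCombination_cyclicVec :
    0 ∈ range (linearCombination ℝ cyclicVec c) := by
  obtain ⟨i, hi⟩ := Infinite.exists_notMem_finset c.support
  refine ⟨Nat.pair i 0, ?_⟩
  simp [linearCombination_cyclicVec_apply_pair, Finsupp.notMem_support_iff.1 hi]

lemma finite_range_linearCombination_cyclicVec :
    (range (linearCombination ℝ cyclicVec c)).Finite :=
  (Finset.finite_toSet _).subset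
    (range_linearCombination_cyclicVec_subset c fun _ hi => Finset.le_sup (f := id) hi)

lemma ncard_range_linearCombination_cyclicVec_mem_blocks (hc : c ≠ 0) :
    (range (linearCombination ℝ cyclicVec c)).ncard ∈ blocks := by
  have hne : c.support.Nonempty := Finsupp.support_nonempty_iff.2 hc
  set k := c.support.max' hne
  have hck : c k ≠ 0 := Finsupp.mem_support_iff.1 (c.support.max'_mem hne)
  refine ⟨k, ?_, ?_⟩
  · calc 4 ^ k < (insert 0 (columnValues c k)).card := by
          rw [Finset.card_insert_of_notMem (zero_notMem_columnValues hck), card_columnValues hck]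
          omega
      _ = (↑(insert 0 (columnValues c k)) : Set ℝ).ncard := (ncard_coe_finset _).symm
      _ ≤ _ := by
          refine ncard_le_ncard ?_ (finite_range_linearCombination_cyclicVec c)
          rw [Finset.coe_insert]
          exact insert_subset (zero_mem_range_linearCombination_cyclicVec c)
            (columnValues_subset_range c k)
  · calc _ ≤ (↑(insert 0 ((Finset.range (k + 1)).biUnion (columnValues c))) : Set ℝ).ncard :=
          ncard_le_ncard
            (range_linearCombination_cyclicVec_subset c fun i hi => c.support.le_max' i hi)
            (Finset.finite_toSet _)
      _ ≤ ((Finset.range (k + 1)).biUnion (columnValues c)).card + 1 := by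
          rw [ncard_coe_finset]
          exact Finset.card_insert_le _ _
      _ ≤ (∑ i ∈ Finset.range (k + 1), 4 ^ i) + 1 := by
          gcongr
          exact Finset.card_biUnion_le.trans (Finset.sum_le_sum fun i _ => card_columnValues_le c i)
      _ ≤ 2 * 4 ^ k + 1 := by gcongr; exact geom_sum_four_le k

lemma accPtsL_linearCombination_cyclicVec :
    accPtsL (linearCombination ℝ cyclicVec c) =
      range (linearCombination ℝ cyclicVec c) :=
  accPts_eq_range_s11 (finite_range_linearCombination_cyclicVec c)
    (infinite_preimage_linearCombination_cyclicVec c)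

end

lemma linearIndependent_cyclicVec : LinearIndependent ℝ cyclicVec :=
  linearIndependent_iff.2 fun c hc => Finsupp.ext fun i => by
    simpa [linearCombination_cyclicVec_apply_pair] using congr_arg (· (Nat.pair i 0)) hc

lemma Submodule.not_finite_span_range {R M ι : Type*} [Semiring R] [StrongRankCondition R]
    [AddCommMonoid M] [Module R M] [Infinite ι] {v : ι → M} (hv : LinearIndependent R v) :
    ¬ Module.Finite R (span R (range v)) :=
  fun _ => Module.Finite.not_linearIndependent_of_infinite _ (linearIndependent_span hv)

theorem exists_lineable_with_unbounded_gaps :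
    ∃ a : ℕ → ℕ, StrictMono a ∧ 2 ≤ a 0 ∧
      (∀ C : ℕ, ∃ m : ℕ, C ≤ a (m + 1) - a m) ∧
      ∃ M : Submodule ℝ Linf, ¬ Module.Finite ℝ M ∧
        ∀ z ∈ M, z ≠ 0 → (accPtsL z).Finite ∧ (accPtsL z).ncard ∈ Set.range a := by
  classical
  refine ⟨Nat.nth (· ∈ blocks), Nat.nth_strictMono blocks_infinite,
    two_le_of_mem_blocks (Nat.nth_mem_of_infinite blocks_infinite 0), fun C => ?_,
    Submodule.span ℝ (range cyclicVec),
    Submodule.not_finite_span_range linearIndependent_cyclicVec, fun z hz hz0 => ?_⟩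
  · refine Nat.exists_le_nth_succ_sub_nth blocks_infinite (two_mul_four_pow_add_one_mem_blocks C)
      fun m hm hCm => ?_
    have hm_gt := four_pow_succ_lt_of_mem_blocks hm hCm
    have hC := Nat.lt_pow_self (n := C) (show 1 < 4 by norm_num)
    rw [pow_succ] at hm_gt
    omega
  · obtain ⟨c, rfl⟩ := Finsupp.mem_span_range_iff_exists_finsupp.1 hz
    rw [← linearCombination_apply] at hz0 ⊢
    have hc : c ≠ 0 := by rintro rfl; simp at hz0
    rw [accPtsL_linearCombination_cyclicVec]
    exact ⟨finite_range_linearCombination_cyclicVec c,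
      _, Nat.nth_count (ncard_range_linearCombination_cyclicVec_mem_blocks c hc)⟩
end
end

section
/- Let A ⊆ ℕ\{1\}. If L(A) ∪ {0} contains a dense infinite-dimensional linear subspace of ℓ∞, then A ∩ (A − 1) is infinite, i.e., there are infinitely many a ∈ A with a + 1 ∈ A. -/
open Filter Topology Set ENNReal

noncomputable section

/-! Take `z ∈ M` with at least `n + 3` accumulation points, two of them `α₁ ≠ α₂`, and by density
`w ∈ M` uniformly close to the indicator of the indices where `z` is near `α₁`. The joint
accumulation points `P` of `(z, w)` form a finite set close to the graph of the indicator of `{α₁}`,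
and the accumulation points of `z + t • w` are the images of `P` under `p ↦ p.1 + t * p.2`. For
generic `t` this map is injective on `P`; for one well-chosen `t` exactly one pair of points of `P`
collides, one above `α₂` and one above `α₁`. Hence both `|P| - 1 > n` and `|P|` lie in `A`. -/

section SubseqLimits

variable {X Y : Type*} [TopologicalSpace X] [TopologicalSpace Y]

theorem subseqLimits_subset {u : ℕ → X} {K : Set X} (hK : IsClosed K) (hu : ∀ n, u n ∈ K) :
    subseqLimits u ⊆ K := fun _ ⟨φ, _, hlim⟩ =>
  hK.mem_of_tendsto hlim (Eventually.of_forall fun k => hu (φ k))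

theorem subseqLimits_const [T2Space X] (a : X) : subseqLimits (fun _ : ℕ => a) = {a} := by
  ext b
  refine ⟨fun ⟨_, _, hlim⟩ => tendsto_nhds_unique hlim tendsto_const_nhds, ?_⟩
  rintro rfl
  exact ⟨id, strictMono_id, tendsto_const_nhds⟩

variable [FirstCountableTopology X]

theorem IsCompact.exists_mem_subseqLimits {u : ℕ → X} {K : Set X} (hK : IsCompact K)
    (hu : ∃ᶠ n in atTop, u n ∈ K) : ∃ a ∈ K, a ∈ subseqLimits u :=
  let ⟨a, ha, φ, hφ, hlim⟩ := hK.tendsto_subseq' hu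
  ⟨a, ha, φ, hφ, hlim⟩

theorem subseqLimits_comp_eq_image [T2Space Y] {u : ℕ → X} {K : Set X} (hK : IsCompact K)
    (hu : ∀ n, u n ∈ K) {f : X → Y} (hf : Continuous f) :
    subseqLimits (f ∘ u) = f '' subseqLimits u := by
  ext b
  constructor
  · rintro ⟨φ, hφ, hlim⟩
    obtain ⟨a, -, ψ, hψ, hlimψ⟩ := hK.tendsto_subseq fun n => hu (φ n)
    refine ⟨a, ⟨φ ∘ ψ, hφ.comp hψ, hlimψ⟩, tendsto_nhds_unique ?_ (hlim.comp hψ.tendsto_atTop)⟩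
    exact (hf.tendsto a).comp hlimψ
  · rintro ⟨a, ⟨φ, hφ, hlim⟩, rfl⟩
    exact ⟨φ, hφ, (hf.tendsto a).comp hlim⟩

end SubseqLimits

def jointAccPtsL (z w : Linf) : Set (ℝ × ℝ) := subseqLimits fun n => (z n, w n)

theorem abs_apply_le_norm (z : Linf) (n : ℕ) : |z n| ≤ ‖z‖ :=
  lp.norm_apply_le_norm ENNReal.top_ne_zero z n

theorem accPtsL_zero : accPtsL 0 = {0} := subseqLimits_const (0 : ℝ)

theorem ne_zero_of_one_lt_ncard_accPtsL {z : Linf} (h : 1 < (accPtsL z).ncard) : z ≠ 0 := by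
  rintro rfl
  simp [accPtsL_zero] at h

theorem subseqLimits_map_eq_image_jointAccPtsL (z w : Linf) {f : ℝ × ℝ → ℝ} (hf : Continuous f) :
    subseqLimits (fun n => f (z n, w n)) = f '' jointAccPtsL z w := by
  refine subseqLimits_comp_eq_image (isCompact_closedBall 0 (max ‖z‖ ‖w‖)) (fun n => ?_) hf
  rw [mem_closedBall_zero_iff, Prod.norm_mk]
  exact max_le_max (abs_apply_le_norm z n) (abs_apply_le_norm w n)

theorem image_fst_jointAccPtsL (z w : Linf) : Prod.fst '' jointAccPtsL z w = accPtsL z :=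
  (subseqLimits_map_eq_image_jointAccPtsL z w continuous_fst).symm

theorem image_snd_jointAccPtsL (z w : Linf) : Prod.snd '' jointAccPtsL z w = accPtsL w :=
  (subseqLimits_map_eq_image_jointAccPtsL z w continuous_snd).symm

theorem accPtsL_add_smul (z w : Linf) (t : ℝ) :
    accPtsL (z + t • w) = (fun p : ℝ × ℝ => p.1 + t * p.2) '' jointAccPtsL z w := by
  rw [← subseqLimits_map_eq_image_jointAccPtsL z w (by fun_prop)]
  rfl

theorem jointAccPtsL_finite {z w : Linf} (hz : (accPtsL z).Finite) (hw : (accPtsL w).Finite) :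
    (jointAccPtsL z w).Finite :=
  (hz.prod hw).subset fun _ hp =>
    ⟨image_fst_jointAccPtsL z w ▸ mem_image_of_mem _ hp,
      image_snd_jointAccPtsL z w ▸ mem_image_of_mem _ hp⟩

theorem Dense.exists_mem_forall_abs_sub_le {S : Set Linf} (hS : Dense S) (f : ℕ → ℝ) {C : ℝ}
    (hf : ∀ n, |f n| ≤ C) {ε : ℝ} (hε : 0 < ε) : ∃ w ∈ S, ∀ n, |w n - f n| ≤ ε := by
  let u : Linf := ⟨f, memℓp_infty ⟨C, by rintro _ ⟨n, rfl⟩; exact hf n⟩⟩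
  obtain ⟨w, hwu, hwS⟩ := Metric.dense_iff.mp hS u ε hε
  refine ⟨w, hwS, fun n => ?_⟩
  calc |w n - f n| = |(w - u) n| := rfl
    _ ≤ ‖w - u‖ := abs_apply_le_norm _ n
    _ ≤ ε := by rw [← dist_eq_norm]; exact (Metric.mem_ball.mp hwu).le

theorem Set.ncard_image_eq_ncard_sub_one {α β : Type*} {f : α → β} {s : Set α} {a b : α}
    (ha : a ∈ s) (hb : b ∈ s) (hab : a ≠ b) (hf : f a = f b)
    (hinj : InjOn f (s \ {a})) : (f '' s).ncard = s.ncard - 1 := by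
  have himage : f '' s = f '' (s \ {a}) := by
    refine (image_mono sdiff_subset).antisymm' ?_
    rintro _ ⟨x, hx, rfl⟩
    by_cases hxa : x = a
    · exact ⟨b, ⟨hb, hab.symm⟩, hxa ▸ hf.symm⟩
    · exact ⟨x, ⟨hx, hxa⟩, rfl⟩
  rw [himage, hinj.ncard_image, ncard_sdiff_singleton_of_mem ha]

theorem exists_injOn_fst_add_mul_snd {P : Set (ℝ × ℝ)} (hP : P.Finite) :
    ∃ t : ℝ, InjOn (fun p : ℝ × ℝ => p.1 + t * p.2) P := by
  let slope : (ℝ × ℝ) × (ℝ × ℝ) → ℝ := fun pq => (pq.2.1 - pq.1.1) / (pq.1.2 - pq.2.2)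
  obtain ⟨t, ht⟩ := ((hP.prod hP).image slope).infinite_compl.nonempty
  refine ⟨t, fun p hp q hq hpq => ?_⟩
  by_cases h2 : p.2 = q.2
  · exact Prod.ext (by simp only [h2] at hpq; linarith) h2
  · refine absurd ⟨(p, q), ⟨hp, hq⟩, ?_⟩ ht
    rw [div_eq_iff (sub_ne_zero.mpr h2)]
    linarith

theorem exists_ncard_image_fst_add_mul_snd_eq_sub_one {P : Set (ℝ × ℝ)} (hP : P.Finite)
    {α₁ α₂ ε : ℝ} (h₁ : α₁ ∈ Prod.fst '' P) (h₂ : α₂ ∈ Prod.fst '' P) (hne : α₂ ≠ α₁)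
    (hrows : ∀ p ∈ P, if p.1 = α₁ then |p.2 - 1| ≤ ε else |p.2| ≤ ε) (hε : ε ≤ 1 / 8)
    (hsep : 6 * |α₂ - α₁| * ε < (Prod.fst '' P).infsep) :
    ∃ t : ℝ, ((fun p : ℝ × ℝ => p.1 + t * p.2) '' P).ncard = P.ncard - 1 := by
  have hsep' (p) (hp : p ∈ P) (q) (hq : q ∈ P) (h : p.1 ≠ q.1) :
      6 * |α₂ - α₁| * ε < |p.1 - q.1| :=
    hsep.trans_le <| (infsep_le_dist_of_mem (mem_image_of_mem _ hp) (mem_image_of_mem _ hq) h)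
  have high (p) (hp : p ∈ P) (h : p.1 = α₁) : |p.2 - 1| ≤ ε := by simpa [h] using hrows p hp
  have low (p) (hp : p ∈ P) (h : p.1 ≠ α₁) : |p.2| ≤ ε := by simpa [h] using hrows p hp
  obtain ⟨b, hb, hbmin⟩ := Set.exists_min_image _ id
    (hP.preimage (Prod.mk_right_injective α₂).injOn) (by
      obtain ⟨x, hxP, rfl⟩ := h₂
      exact ⟨x.2, hxP⟩)
  obtain ⟨c, hc, hcmax⟩ := Set.exists_max_image _ id
    (hP.preimage (Prod.mk_right_injective α₁).injOn) (by
      obtain ⟨x, hxP, rfl⟩ := h₁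
      exact ⟨x.2, hxP⟩)
  have hb' : |b| ≤ ε := low _ hb hne
  have hc' : |c - 1| ≤ ε := high _ hc rfl
  have hε0 : 0 ≤ ε := (abs_nonneg _).trans hc'
  rw [abs_le] at hb' hc'
  -- the parameter at which `(α₂, b)` and `(α₁, c)` collide
  set t := (α₂ - α₁) / (c - b)
  have htd : t * (c - b) = α₂ - α₁ := div_mul_cancel₀ _ (by linarith)
  have ht0 : t ≠ 0 := div_ne_zero (sub_ne_zero.mpr hne) (by linarith)
  have htabs : |t| * (3 / 4) ≤ |α₂ - α₁| := by
    rw [← htd, abs_mul, abs_of_pos (by linarith : 0 < c - b)]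
    gcongr
    linarith
  have hmixed (p) (hp : p ∈ P) (q) (hq : q ∈ P) (hpq : p.1 + t * p.2 = q.1 + t * q.2)
      (hp1 : p.1 = α₁) (hq1 : q.1 ≠ α₁) : q = (α₂, b) := by
    have hp2 := high p hp hp1
    have hq2 := low q hq hq1
    rw [abs_le] at hp2 hq2
    by_cases hqα : q.1 = α₂
    · have hpc : p.2 ≤ c := hcmax p.2 (by rw [← hp1]; exact hp)
      have hqb : b ≤ q.2 := hbmin q.2 (by rw [← hqα]; exact hq)
      have hgap : t * (p.2 - q.2) = t * (c - b) := by linear_combination hpq - hp1 + hqα - htd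
      have := mul_left_cancel₀ ht0 hgap
      exact Prod.ext hqα (by linarith)
    · -- `q.1` would lie strictly closer to `α₂` than the separation allows
      refine absurd (hsep' q hq (α₂, b) hb hqα) (not_lt.mpr ?_)
      calc |q.1 - α₂| = |t| * |(p.2 - q.2) - (c - b)| := by
            rw [← abs_mul]; congr 1; linear_combination hp1 - hpq + htd
        _ ≤ |t| * (4 * ε) := by gcongr; rw [abs_le]; constructor <;> linarith
        _ ≤ 6 * |α₂ - α₁| * ε := by nlinarith [abs_nonneg t]
  have hinj : InjOn (fun p : ℝ × ℝ => p.1 + t * p.2) (P \ {(α₂, b)}) := by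
    rintro p ⟨hp, hpb⟩ q ⟨hq, hqb⟩ (hpq : p.1 + t * p.2 = q.1 + t * q.2)
    by_cases h1 : p.1 = q.1
    · have : t * (p.2 - q.2) = 0 := by linear_combination hpq - h1
      exact Prod.ext h1 (sub_eq_zero.mp ((mul_eq_zero.mp this).resolve_left ht0))
    by_cases hp1 : p.1 = α₁
    · exact absurd (hmixed p hp q hq hpq hp1 (hp1 ▸ Ne.symm h1)) hqb
    by_cases hq1 : q.1 = α₁
    · exact absurd (hmixed q hq p hp hpq.symm hq1 hp1) hpb
    have hp2 := low p hp hp1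
    have hq2 := low q hq hq1
    rw [abs_le] at hp2 hq2
    refine absurd (hsep' p hp q hq h1) (not_lt.mpr ?_)
    calc |p.1 - q.1| = |t| * |q.2 - p.2| := by
          rw [← abs_mul]; congr 1; linear_combination hpq
      _ ≤ |t| * (2 * ε) := by gcongr; rw [abs_le]; constructor <;> linarith
      _ ≤ 6 * |α₂ - α₁| * ε := by nlinarith [abs_nonneg t]
  refine ⟨t, Set.ncard_image_eq_ncard_sub_one hb hc ?_ ?_ hinj⟩
  · exact fun h => hne (congrArg Prod.fst h)
  · show α₂ + t * b = α₁ + t * c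
    linear_combination -htd

theorem Dense.exists_mem_le_encard_accPtsL {S : Set Linf} (hS : Dense S) (N : ℕ) :
    ∃ w ∈ S, (N : ℕ∞) ≤ (accPtsL w).encard := by
  -- `w` stays within `1/3` of `n % (N + 1)`, so it accumulates near each of `0, …, N`
  obtain ⟨w, hwS, hw⟩ := hS.exists_mem_forall_abs_sub_le (fun n => ((n % (N + 1) : ℕ) : ℝ))
    (C := N + 1) (fun n => by
      rw [abs_of_nonneg (Nat.cast_nonneg _)]
      exact_mod_cast (Nat.mod_lt n N.succ_pos).le) (by norm_num : (0 : ℝ) < 1 / 3)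
  have hnear (i : Fin (N + 1)) : ∃ γ ∈ Metric.closedBall ((i : ℕ) : ℝ) (1 / 3), γ ∈ accPtsL w :=
    (isCompact_closedBall _ _).exists_mem_subseqLimits <|
      (Nat.frequently_mod_eq i.isLt).mono fun n hn => by
        rw [Metric.mem_closedBall, Real.dist_eq]
        simpa [hn] using hw n
  choose γ hγ hγw using hnear
  have hγinj : Function.Injective γ := by
    intro i j hij
    have hi := hγ i
    have hj := hγ j
    rw [Metric.mem_closedBall, Real.dist_eq, abs_le] at hi hj
    rw [hij] at hi
    ext
    by_contra hne
    rcases Nat.lt_or_gt_of_ne hne with h | h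
    · have : ((i : ℕ) : ℝ) + 1 ≤ (j : ℕ) := by exact_mod_cast h
      linarith
    · have : ((j : ℕ) : ℝ) + 1 ≤ (i : ℕ) := by exact_mod_cast h
      linarith
  refine ⟨w, hwS, ?_⟩
  calc (N : ℕ∞) ≤ ENat.card (Fin (N + 1)) := by simp
    _ ≤ (range γ).encard := hγinj.encard_range
    _ ≤ (accPtsL w).encard := encard_le_encard (range_subset_iff.mpr hγw)

theorem Dense.exists_mem_jointAccPtsL_near_indicator {S : Set Linf} (hS : Dense S) (z : Linf)
    {α δ ε : ℝ} (hδ : 0 < δ) (hsep : ∀ a ∈ accPtsL z, a ≠ α → δ ≤ |a - α|) (hε : 0 < ε) :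
    ∃ w ∈ S, ∀ p ∈ jointAccPtsL z w, if p.1 = α then |p.2 - 1| ≤ ε else |p.2| ≤ ε := by
  obtain ⟨w, hwS, hw⟩ := hS.exists_mem_forall_abs_sub_le
    (fun n => if |z n - α| < δ / 2 then 1 else 0) (C := 1)
    (fun n => by split_ifs <;> norm_num) hε
  refine ⟨w, hwS, fun p hp => ?_⟩
  let K : Set (ℝ × ℝ) :=
    {q | δ / 2 ≤ |q.1 - α|} ∩ {q | |q.2| ≤ ε} ∪ {q | |q.1 - α| ≤ δ / 2} ∩ {q | |q.2 - 1| ≤ ε}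
  have hK : IsClosed K := by
    refine .union (.inter ?_ ?_) (.inter ?_ ?_) <;> exact isClosed_le (by fun_prop) (by fun_prop)
  have hzw (n : ℕ) : (z n, w n) ∈ K := by
    have := hw n
    by_cases h : |z n - α| < δ / 2
    · exact .inr ⟨h.le, by simpa [h] using this⟩
    · exact .inl ⟨not_lt.mp h, by simpa [h] using this⟩
  have hp1 : p.1 ∈ accPtsL z := image_fst_jointAccPtsL z w ▸ mem_image_of_mem _ hp
  split_ifs with h
  · rcases subseqLimits_subset hK hzw hp with ⟨(hfar : δ / 2 ≤ |p.1 - α|), -⟩ | ⟨-, hp2⟩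
    · rw [h, sub_self, abs_zero] at hfar
      linarith
    · exact hp2
  · rcases subseqLimits_subset hK hzw hp with ⟨-, hp2⟩ | ⟨(hnear : |p.1 - α| ≤ δ / 2), -⟩
    · exact hp2
    · linarith [hsep _ hp1 h]

theorem exists_gt_mem_and_succ_mem (A : Set ℕ) (M : Submodule ℝ Linf)
    (hdense : Dense (M : Set Linf))
    (hM : ∀ z ∈ M, z ≠ 0 → (accPtsL z).Finite ∧ (accPtsL z).ncard ∈ A) (n : ℕ) :
    ∃ b, n < b ∧ b ∈ A ∧ b + 1 ∈ A := by
  have hfin (w) (hw : w ∈ M) : (accPtsL w).Finite := by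
    by_cases h : w = 0
    · simp [h, accPtsL_zero]
    · exact (hM w hw h).1
  obtain ⟨z, hzM, hz⟩ := hdense.exists_mem_le_encard_accPtsL (n + 3)
  have hL := hfin z hzM
  have hLcard : n + 3 ≤ (accPtsL z).ncard := by rwa [← hL.cast_ncard_eq, Nat.cast_le] at hz
  obtain ⟨α₁, α₂, hα₁, hα₂, hne⟩ := (one_lt_ncard_iff hL).mp (by omega)
  have hδ : 0 < (accPtsL z).infsep := hL.infsep_pos_iff_nontrivial.mpr ⟨α₁, hα₁, α₂, hα₂, hne⟩
  obtain ⟨η, hη, hηδ⟩ := exists_pos_mul_lt hδ (6 * |α₂ - α₁|)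
  set ε := min (1 / 8) η
  have hε : 0 < ε := lt_min (by norm_num) hη
  have hεδ : 6 * |α₂ - α₁| * ε < (accPtsL z).infsep :=
    (mul_le_mul_of_nonneg_left (min_le_right _ _) (by positivity)).trans_lt hηδ
  obtain ⟨w, hwM, hrows⟩ := hdense.exists_mem_jointAccPtsL_near_indicator z hδ
    (fun a ha h => infsep_le_dist_of_mem ha hα₁ h) hε
  set P := jointAccPtsL z w
  have hP : P.Finite := jointAccPtsL_finite hL (hfin w hwM)
  have hfst : Prod.fst '' P = accPtsL z := image_fst_jointAccPtsL z w
  have hPcard : (accPtsL z).ncard ≤ P.ncard := hfst ▸ ncard_image_le hP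
  obtain ⟨t₁, ht₁⟩ := exists_ncard_image_fst_add_mul_snd_eq_sub_one hP (hfst ▸ hα₁)
    (hfst ▸ hα₂) hne.symm hrows (min_le_left _ _) (hfst ▸ hεδ)
  obtain ⟨t₂, ht₂⟩ := exists_injOn_fst_add_mul_snd hP
  have hcomb (t : ℝ) : z + t • w ∈ M := M.add_mem hzM (M.smul_mem t hwM)
  have hA (t : ℝ) (h : 1 < ((fun p : ℝ × ℝ => p.1 + t * p.2) '' P).ncard) :
      ((fun p : ℝ × ℝ => p.1 + t * p.2) '' P).ncard ∈ A := by
    rw [← accPtsL_add_smul] at h ⊢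
    exact (hM _ (hcomb t) (ne_zero_of_one_lt_ncard_accPtsL h)).2
  refine ⟨P.ncard - 1, by omega, ht₁ ▸ hA t₁ (by omega), ?_⟩
  rw [Nat.sub_add_cancel (by omega), ← ht₂.ncard_image]
  exact hA t₂ (by rw [ht₂.ncard_image]; omega)

theorem densely_lineable_implies_succ_infinite_general (A : Set ℕ)
    (M : Submodule ℝ Linf) (hdense : Dense (M : Set Linf))
    (hM : ∀ z ∈ M, z ≠ 0 → (accPtsL z).Finite ∧ (accPtsL z).ncard ∈ A) :
    {a ∈ A | a + 1 ∈ A}.Infinite :=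
  infinite_of_forall_exists_gt fun n =>
    let ⟨b, hnb, hb, hb1⟩ := exists_gt_mem_and_succ_mem A M hdense hM n
    ⟨b, ⟨hb, hb1⟩, hnb⟩

theorem densely_lineable_implies_succ_infinite (A : Set ℕ) (hA : A ⊆ {n | 2 ≤ n})
    (M : Submodule ℝ Linf) (hdense : Dense (M : Set Linf)) (hinf : ¬ Module.Finite ℝ M)
    (hM : ∀ z ∈ M, z ≠ 0 → (accPtsL z).Finite ∧ (accPtsL z).ncard ∈ A) :
    {a ∈ A | a + 1 ∈ A}.Infinite :=
  densely_lineable_implies_succ_infinite_general A M hdense hM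
end
end

section
/- There is no linear isometry φ : ℓ∞ → ℓ∞ whose range, minus the zero vector, consists entirely of sequences with at most countably many accumulation points. Equivalently, L(ℕ ∪ {ω}) ∪ {0} contains no isometric copy of ℓ∞. -/
open Filter Topology Set ENNReal

noncomputable section

/-!
Let `s` be a sequence with dense range in `[0, 1]` and, for `t ∈ [0, 1]`, let
`xₜ = 1 - |s - t|`, an element of norm `1`. For a linear isometry `T`, some coordinate of `T xₜ`
nearly attains `‖T xₜ‖ = 1`; comparing with the norms of `xₜ - s / 2`, `xₜ - (1 - s) / 2` and `1`
forces the same coordinate of `T s` to be close to `±t`. So the closure of the range of `T s`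
meets `{t, -t}` for every `t ∈ [0, 1]` and is uncountable. On the other hand it is contained in
the range of `T s` together with its accumulation points, which is countable.
-/

theorem closure_range_subset_range_union_accPts (x : ℕ → ℝ) :
    closure (range x) ⊆ range x ∪ accPts x := by
  intro y hy
  refine or_iff_not_imp_left.2 fun hyx => ?_
  have hcluster : MapClusterPt y atTop x := by
    refine mapClusterPt_atTop_iff_forall_mem_closure.2 fun N => ?_
    rw [← image_univ, ← Iio_union_Ici, image_union, closure_union,
      ((finite_Iio N).image x).isClosed.closure_eq] at hy
    exact hy.resolve_left fun h => hyx (image_subset_range _ _ h)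
  exact hcluster.tendsto_subseq

theorem countable_closure_range_of_countable_accPts {x : ℕ → ℝ} (hx : (accPts x).Countable) :
    (closure (range x)).Countable :=
  ((countable_range x).union hx).mono (closure_range_subset_range_union_accPts x)

theorem closure_range_abs_subset_abs_image_closure {x : ℕ → ℝ}
    (hx : Bornology.IsBounded (range x)) :
    closure (range fun n => |x n|) ⊆ abs '' closure (range x) :=
  closure_minimal
    (range_subset_iff.2 fun n => mem_image_of_mem _ (subset_closure (mem_range_self n)))
    (hx.isCompact_closure.image continuous_abs).isClosed

theorem not_countable_Icc_zero_one : ¬ (Icc (0 : ℝ) 1).Countable := by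
  rw [← Cardinal.le_aleph0_iff_set_countable, Cardinal.mk_Icc_real zero_lt_one, not_le]
  exact Cardinal.aleph0_lt_continuum

namespace Linf

theorem isBounded_range (x : Linf) : Bornology.IsBounded (range fun n => x n) :=
  isBounded_iff_forall_norm_le.2
    ⟨‖x‖, forall_mem_range.2 fun n => lp.norm_apply_le_norm ENNReal.top_ne_zero x n⟩

theorem memℓp_infty_of_forall_abs_le {f : ℕ → ℝ} (C : ℝ) (hf : ∀ n, |f n| ≤ C) : Memℓp f ∞ :=
  memℓp_infty ⟨C, forall_mem_range.2 hf⟩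

open TopologicalSpace (denseSeq denseRange_denseSeq)

def denseUnitSeq : Linf :=
  ⟨fun n => denseSeq unitInterval n, memℓp_infty_of_forall_abs_le 1 fun n =>
    abs_le.2 ⟨by linarith [unitInterval.nonneg (denseSeq unitInterval n)], unitInterval.le_one _⟩⟩

/-- The supremum `1` of `tent t` is approached exactly where `denseUnitSeq` approaches `t`. -/
def tent (t : unitInterval) : Linf :=
  ⟨fun n => 1 - |(denseSeq unitInterval n : ℝ) - t|, memℓp_infty_of_forall_abs_le 1 fun n => by
    have := abs_sub_le_of_nonneg_of_le (denseSeq unitInterval n).2.1 (denseSeq unitInterval n).2.2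
      t.2.1 t.2.2
    rw [abs_le]
    constructor <;> linarith [abs_nonneg ((denseSeq unitInterval n : ℝ) - t)]⟩

@[simp] theorem denseUnitSeq_apply (n : ℕ) : denseUnitSeq n = denseSeq unitInterval n := rfl

@[simp] theorem tent_apply (t : unitInterval) (n : ℕ) :
    tent t n = 1 - |(denseSeq unitInterval n : ℝ) - t| := rfl

theorem denseUnitSeq_ne_zero : denseUnitSeq ≠ 0 := by
  intro h
  obtain ⟨n, hn⟩ := denseRange_denseSeq unitInterval |>.exists_dist_lt 1 one_pos
  have h0 : (denseSeq unitInterval n : ℝ) = 0 := by simpa using congr($h n)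
  rw [Subtype.dist_eq, h0, Real.dist_eq] at hn
  norm_num at hn

theorem one_le_norm_tent (t : unitInterval) : 1 ≤ ‖tent t‖ := by
  refine le_of_forall_pos_lt_add fun ε hε => ?_
  obtain ⟨n, hn⟩ := denseRange_denseSeq unitInterval |>.exists_dist_lt t hε
  rw [Subtype.dist_eq, Real.dist_eq, abs_sub_comm] at hn
  have := lp.norm_apply_le_norm ENNReal.top_ne_zero (tent t) n
  rw [tent_apply, Real.norm_eq_abs] at this
  linarith [le_abs_self (1 - |(denseSeq unitInterval n : ℝ) - t|)]

theorem norm_tent_sub_half_denseUnitSeq_le (t : unitInterval) :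
    ‖tent t - (2⁻¹ : ℝ) • denseUnitSeq‖ ≤ 1 - t / 2 := by
  refine lp.norm_le_of_forall_le (by linarith [t.2.2]) fun n => ?_
  have hs := (denseSeq unitInterval n).2
  have ht := t.2
  simp only [lp.coeFn_sub, lp.coeFn_smul, Pi.sub_apply, Pi.smul_apply, smul_eq_mul, tent_apply,
    denseUnitSeq_apply, Real.norm_eq_abs]
  rcases abs_cases ((denseSeq unitInterval n : ℝ) - t) with ⟨he, hsign⟩ | ⟨he, hsign⟩ <;>
    rw [he] <;>
    exact abs_le.2 ⟨by linarith [hs.1, hs.2, ht.1, ht.2], by linarith [hs.1, hs.2, ht.1, ht.2]⟩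

theorem norm_tent_sub_half_one_sub_denseUnitSeq_le (t : unitInterval) :
    ‖tent t - (2⁻¹ : ℝ) • (1 - denseUnitSeq)‖ ≤ (1 + t) / 2 := by
  refine lp.norm_le_of_forall_le (by linarith [t.2.1]) fun n => ?_
  have hs := (denseSeq unitInterval n).2
  have ht := t.2
  simp only [lp.coeFn_sub, lp.coeFn_smul, lp.infty_coeFn_one, Pi.sub_apply, Pi.smul_apply,
    Pi.one_apply, smul_eq_mul, tent_apply, denseUnitSeq_apply, Real.norm_eq_abs]
  rcases abs_cases ((denseSeq unitInterval n : ℝ) - t) with ⟨he, hsign⟩ | ⟨he, hsign⟩ <;>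
    rw [he] <;>
    exact abs_le.2 ⟨by linarith [hs.1, hs.2, ht.1, ht.2], by linarith [hs.1, hs.2, ht.1, ht.2]⟩

/-- The bounds on `f` at `tent t - denseUnitSeq / 2`, `tent t - (1 - denseUnitSeq) / 2` and `1`
pin `f denseUnitSeq` down from both sides. -/
theorem abs_apply_denseUnitSeq_sub_lt {f : Linf →ₗ[ℝ] ℝ} (hf : ∀ y, |f y| ≤ ‖y‖)
    {t : unitInterval} {δ : ℝ} (h : 1 - δ < f (tent t)) : |f denseUnitSeq - t| < 2 * δ := by
  have h₁ := (hf _).trans (norm_tent_sub_half_denseUnitSeq_le t)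
  have h₂ := (hf _).trans (norm_tent_sub_half_one_sub_denseUnitSeq_le t)
  have h₃ := (hf 1).trans_eq norm_one
  simp only [map_sub, map_smul, smul_eq_mul, abs_le] at h₁ h₂ h₃
  rw [abs_lt]
  constructor <;> linarith [h₁.1, h₁.2, h₂.1, h₂.2, h₃.1, h₃.2]

theorem abs_abs_apply_denseUnitSeq_sub_lt {f : Linf →ₗ[ℝ] ℝ} (hf : ∀ y, |f y| ≤ ‖y‖)
    {t : unitInterval} {δ : ℝ} (h : 1 - δ < |f (tent t)|) : |(|f denseUnitSeq| - t)| < 2 * δ := by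
  rw [← abs_of_nonneg t.2.1]
  rcases lt_abs.1 h with h | h
  · exact (abs_abs_sub_abs_le_abs_sub _ _).trans_lt (abs_apply_denseUnitSeq_sub_lt hf h)
  · rw [← abs_neg (f _)]
    exact (abs_abs_sub_abs_le_abs_sub _ _).trans_lt
      (abs_apply_denseUnitSeq_sub_lt (f := -f) (by simpa using hf) h)

theorem Icc_subset_closure_range_abs_apply_denseUnitSeq (T : Linf →ₗᵢ[ℝ] Linf) :
    Icc 0 1 ⊆ closure (range fun i => |T denseUnitSeq i|) := by
  intro t ht
  refine Metric.mem_closure_iff.2 fun ε hε => ?_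
  have hnorm : 1 - ε / 2 < ⨆ i, ‖T (tent ⟨t, ht⟩) i‖ := by
    rw [← lp.norm_eq_ciSup, T.norm_map]
    linarith [one_le_norm_tent ⟨t, ht⟩]
  obtain ⟨i, hi⟩ := exists_lt_of_lt_ciSup hnorm
  have hf : ∀ y, |T y i| ≤ ‖y‖ := fun y =>
    (lp.norm_apply_le_norm ENNReal.top_ne_zero (T y) i).trans_eq (T.norm_map y)
  have : |(|T denseUnitSeq i| - t)| < 2 * (ε / 2) :=
    abs_abs_apply_denseUnitSeq_sub_lt (f := (lp.evalₗ _ ∞ i).comp T.toLinearMap) hf hi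
  refine ⟨_, mem_range_self i, ?_⟩
  rw [Real.dist_eq, abs_sub_comm]
  linarith

end Linf

theorem no_isometric_copy_in_countable_accPts :
    ¬ ∃ φ : Linf →ₗᵢ[ℝ] Linf, ∀ x : Linf, x ≠ 0 → (accPtsL (φ x)).Countable := by
  rintro ⟨T, hT⟩
  have hcountable :=
    countable_closure_range_of_countable_accPts (hT _ Linf.denseUnitSeq_ne_zero)
  refine not_countable_Icc_zero_one ((hcountable.image abs).mono ?_)
  exact (Linf.Icc_subset_closure_range_abs_apply_denseUnitSeq T).trans
    (closure_range_abs_subset_abs_image_closure (Linf.isBounded_range _))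
end
end
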